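/- arXiv:1711.02458 — 3 statements merged into one kernel-verified Lean document; each statement's English description precedes it below -/
import Mathlib

section
/- Let N ≥ 1 and let B be an N×N bi-stochastic (doubly stochastic) real matrix. Then the integral of the Shannon entropy H(Bλ) over the probability simplex Δ_{N−1} with respect to the uniform probability measure μ_N satisfies ∫ H(Bλ) dμ_N(λ) = H_N − 1 + Q(Bᵀ), where Q(Bᵀ) = (1/N) Σ_{i=1}^N Q(b_i) is the average of the subentropies of the rows b_1, …, b_N of B, provided that each row of B has pairwise distinct entries (so that the subentropy formula is well defined). -/
open MeasureTheory Real

/-- Shannon entropy of a vector, with the convention `0 * log 0 = 0`. -/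
noncomputable def shannonEntropy {N : ℕ} (p : Fin N → ℝ) : ℝ :=
  ∑ i, Real.negMulLog (p i)

/-- Subentropy of a vector (well defined when the entries are pairwise distinct). -/
noncomputable def subentropy {N : ℕ} (p : Fin N → ℝ) : ℝ :=
  -∑ i, p i ^ N * Real.log (p i) / ∏ j ∈ Finset.univ.erase i, (p i - p j)

/-- A matrix is bi-stochastic if it has nonnegative entries and all row and column sums are 1. -/
def IsBistochastic {N : ℕ} (B : Matrix (Fin N) (Fin N) ℝ) : Prop :=
  (∀ i j, 0 ≤ B i j) ∧ (∀ i, ∑ j, B i j = 1) ∧ (∀ j, ∑ i, B i j = 1)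

/-- Parametrization of the probability simplex `Δ_{N-1}` by the solid simplex in `ℝ^{N-1}`:
`x ↦ (x_1, …, x_{N-1}, 1 - ∑_{j<N} x_j)`. -/
noncomputable def simplexMap (N : ℕ) (x : Fin (N - 1) → ℝ) : Fin N → ℝ :=
  fun i => if h : (i : ℕ) < N - 1 then x ⟨i, h⟩ else 1 - ∑ j, x j

/-- The solid simplex `T = {x ∈ ℝ^{N-1} : x_j ≥ 0, ∑_j x_j ≤ 1}`. -/
def solidSimplex (N : ℕ) : Set (Fin (N - 1) → ℝ) :=
  {x | (∀ j, 0 ≤ x j) ∧ ∑ j, x j ≤ 1}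

/-- Integral of a function on the probability simplex with respect to the uniform
probability measure `μ_N`, realized as `(N-1)!` times the Lebesgue integral over the
solid simplex of the parametrized integrand. -/
noncomputable def simplexIntegral (N : ℕ) (f : (Fin N → ℝ) → ℝ) : ℝ :=
  ((N - 1).factorial : ℝ) * ∫ x in solidSimplex N, f (simplexMap N x)

/-- The `N`-th harmonic number `H_N = ∑_{j=1}^N 1/j`. -/
noncomputable def harmonicNum (N : ℕ) : ℝ := ∑ j ∈ Finset.range N, (1 : ℝ) / (j + 1)

/-- The antiderivative tower: `gg 0 = negMulLog` and `(gg (k+1))' = gg k`. -/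
noncomputable def gg (k : ℕ) (t : ℝ) : ℝ :=
  (- t ^ (k+1) * Real.log t + (harmonicNum (k+1) - 1) * t ^ (k+1)) / (k+1).factorial

lemma harmonicNum_one : harmonicNum 1 = 1 := by simp [harmonicNum]

lemma gg_zero : gg 0 = Real.negMulLog := by
  funext t
  simp [gg, harmonicNum_one, Real.negMulLog, mul_comm]

lemma continuous_pow_mul_log (m : ℕ) : Continuous fun t : ℝ => t ^ (m+1) * Real.log t := by
  have : (fun t : ℝ => t ^ (m+1) * Real.log t) = fun t => t ^ m * -Real.negMulLog t := by
    funext t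
    simp [Real.negMulLog, pow_succ]
    ring
  rw [this]
  exact (continuous_pow m).mul Real.continuous_negMulLog.neg

lemma gg_continuous (k : ℕ) : Continuous (gg k) := by
  unfold gg
  simp only [neg_mul]
  exact (Continuous.neg (continuous_pow_mul_log k)).add
    ((continuous_const.mul (continuous_pow (k+1)))) |>.div_const _

lemma pow_mul_log_hasDerivAt (m : ℕ) (t : ℝ) :
    HasDerivAt (fun t : ℝ => t ^ (m+2) * Real.log t)
      ((m+2) * t ^ (m+1) * Real.log t + t ^ (m+1)) t := by
  rcases eq_or_ne t 0 with rfl | ht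
  · -- derivative at 0 is 0
    have h0 : ((m:ℝ)+2) * 0 ^ (m+1) * Real.log 0 + 0 ^ (m+1) = 0 := by simp
    rw [h0]
    rw [hasDerivAt_iff_tendsto_slope]
    have hcont : Continuous fun t : ℝ => t ^ (m+1) * Real.log t := continuous_pow_mul_log m
    have h1 : Filter.Tendsto (fun t : ℝ => t ^ (m+1) * Real.log t) (nhdsWithin 0 {(0:ℝ)}ᶜ) (nhds 0) := by
      have := hcont.tendsto 0
      simpa using this.mono_left nhdsWithin_le_nhds
    refine h1.congr' ?_
    filter_upwards [self_mem_nhdsWithin] with x hx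
    have hx' : (x:ℝ) ≠ 0 := hx
    rw [slope_def_field]
    field_simp
    ring
  · have h1 : HasDerivAt (fun t : ℝ => t ^ (m+2)) ((m+2) * t ^ (m+1)) t := by
      simpa using hasDerivAt_pow (m+2) t
    have h2 : HasDerivAt Real.log t⁻¹ t := Real.hasDerivAt_log ht
    have := h1.mul h2
    convert this using 1
    · rfl
    · rfl
    · rfl
    field_simp
    ring

lemma harmonicNum_succ (k : ℕ) : harmonicNum (k+1) = harmonicNum k + 1/(k+1) := by
  simp [harmonicNum, Finset.sum_range_succ]

lemma gg_hasDerivAt (k : ℕ) (t : ℝ) : HasDerivAt (gg (k+1)) (gg k t) t := by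
  have h1 := pow_mul_log_hasDerivAt k t
  have h2 : HasDerivAt (fun t : ℝ => t ^ (k+2)) ((k+2) * t ^ (k+1)) t := by
    simpa using hasDerivAt_pow (k+2) t
  have h3 := ((h1.neg).add (h2.const_mul (harmonicNum (k+2) - 1))).div_const
    ((k+2).factorial : ℝ)
  have keyf : ((k+2).factorial : ℝ) = (k+2) * (k+1).factorial := by
    rw [Nat.factorial_succ]; push_cast; ring
  have keyh : harmonicNum (k+2) = harmonicNum (k+1) + 1/(k+2) := by
    rw [show k+2 = (k+1)+1 from rfl, harmonicNum_succ]; push_cast; ring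
  convert h3 using 1
  · rfl
  · rfl
  · funext s
    simp only [gg, neg_mul, Pi.add_apply, Pi.neg_apply]
  · simp only [gg, keyf, keyh]
    have hf : ((k+1).factorial : ℝ) ≠ 0 := by positivity
    have hk2 : ((k:ℝ)+2) ≠ 0 := by positivity
    field_simp
    ring

/-- Divided-difference-type sum over a finset of nodes. -/
noncomputable def dd (F : ℝ → ℝ) {ι : Type*} [DecidableEq ι] (v : ι → ℝ) (s : Finset ι) : ℝ :=
  ∑ i ∈ s, F (v i) / ∏ j ∈ s.erase i, (v i - v j)

lemma dd_erase {F : ℝ → ℝ} {ι : Type*} [DecidableEq ι] {v : ι → ℝ} {s : Finset ι}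
    (hv : Set.InjOn v s) {b : ι} (hb : b ∈ s) :
    dd F v (s.erase b) = ∑ i ∈ s.erase b,
      F (v i) * (v i - v b) / ∏ j ∈ s.erase i, (v i - v j) := by
  unfold dd
  refine Finset.sum_congr rfl fun i hi => ?_
  obtain ⟨hib, his⟩ := Finset.mem_erase.mp hi
  have hbe : b ∈ s.erase i := Finset.mem_erase.mpr ⟨fun h => hib h.symm, hb⟩
  have hP : ∏ j ∈ s.erase i, (v i - v j)
      = (v i - v b) * ∏ j ∈ (s.erase i).erase b, (v i - v j) :=
    (Finset.mul_prod_erase _ _ hbe).symm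
  have hvib : v i - v b ≠ 0 := sub_ne_zero.mpr (fun h => hib (hv his hb h))
  rw [Finset.erase_right_comm, hP, mul_comm (F (v i)) (v i - v b),
    mul_div_mul_left _ _ hvib]

lemma dd_rec {F : ℝ → ℝ} {ι : Type*} [DecidableEq ι] {v : ι → ℝ} {s : Finset ι}
    (hv : Set.InjOn v s) {a b : ι} (ha : a ∈ s) (hb : b ∈ s) (hab : a ≠ b) :
    dd F v s = (dd F v (s.erase b) - dd F v (s.erase a)) / (v a - v b) := by
  have hvab : v a - v b ≠ 0 := sub_ne_zero.mpr (fun h => hab (hv ha hb h))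
  rw [eq_div_iff hvab]
  set S' : Finset ι := (s.erase b).erase a with hS'
  set P : ι → ℝ := fun i => ∏ j ∈ s.erase i, (v i - v j) with hP
  have haeb : a ∈ s.erase b := Finset.mem_erase.mpr ⟨hab, ha⟩
  have hbea : b ∈ s.erase a := Finset.mem_erase.mpr ⟨fun h => hab h.symm, hb⟩
  have e2' : (s.erase a).erase b = S' := by rw [hS', Finset.erase_right_comm]
  have L : dd F v s = F (v a) / P a + (F (v b) / P b + ∑ i ∈ S', F (v i) / P i) := by
    unfold dd
    rw [← Finset.add_sum_erase _ _ ha, ← Finset.add_sum_erase _ _ hbea, e2']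
  have R1 : (∑ i ∈ s.erase b, F (v i) * (v i - v b) / P i)
      = F (v a) * (v a - v b) / P a + ∑ i ∈ S', F (v i) * (v i - v b) / P i := by
    rw [← Finset.add_sum_erase _ _ haeb, hS']
  have R2 : (∑ i ∈ s.erase a, F (v i) * (v i - v a) / P i)
      = F (v b) * (v b - v a) / P b + ∑ i ∈ S', F (v i) * (v i - v a) / P i := by
    rw [← Finset.add_sum_erase _ _ hbea, e2']
  rw [dd_erase hv hb, dd_erase hv ha, L, R1, R2]
  have key : (∑ i ∈ S', F (v i) * (v i - v b) / P i)
      - (∑ i ∈ S', F (v i) * (v i - v a) / P i)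
      = (∑ i ∈ S', F (v i) / P i) * (v a - v b) := by
    rw [← Finset.sum_sub_distrib, Finset.sum_mul]
    refine Finset.sum_congr rfl fun i _ => ?_
    rw [div_sub_div_same]
    ring
  linear_combination -key

lemma dd_comp_succAbove (F : ℝ → ℝ) {n : ℕ} (b : Fin (n+2) → ℝ) (w : Fin (n+2)) :
    dd F (fun i => b (w.succAbove i)) (Finset.univ : Finset (Fin (n+1)))
      = dd F b (Finset.univ.erase w) := by
  unfold dd
  have he : Function.Injective w.succAbove := Fin.succAbove_right_injective
  have himg : (Finset.univ : Finset (Fin (n+1))).image w.succAbove = Finset.univ.erase w := by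
    rw [Fin.image_succAbove_univ, Finset.compl_singleton]
  rw [← himg, Finset.sum_image (fun a _ c _ h => he h)]
  refine Finset.sum_congr rfl fun i _ => ?_
  congr 1
  rw [← Finset.image_erase he, Finset.prod_image (fun a _ c _ h => he h)]

open Polynomial in
lemma coeff_interpolate {n : ℕ} (b : Fin (n+1) → ℝ) (hb : Function.Injective b)
    (r : Fin (n+1) → ℝ) :
    (Lagrange.interpolate Finset.univ b r).coeff n
      = ∑ i, r i / ∏ j ∈ Finset.univ.erase i, (b i - b j) := by
  rw [Lagrange.interpolate_apply, Polynomial.finset_sum_coeff]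
  refine Finset.sum_congr rfl fun i _ => ?_
  rw [Polynomial.coeff_C_mul]
  have hdeg : (Lagrange.basis Finset.univ b i).natDegree = n := by
    rw [Lagrange.natDegree_basis hb.injOn (Finset.mem_univ i)]
    simp
  have hl : (Lagrange.basis Finset.univ b i).coeff n
      = (Lagrange.basis Finset.univ b i).leadingCoeff := by
    rw [Polynomial.leadingCoeff, hdeg]
  rw [hl, Lagrange.basis, Polynomial.leadingCoeff_prod]
  have : ∀ j ∈ Finset.univ.erase i, (Lagrange.basisDivisor (b i) (b j)).leadingCoeff
      = (b i - b j)⁻¹ := by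
    intro j hj
    rw [Lagrange.basisDivisor, Polynomial.leadingCoeff_mul, Polynomial.leadingCoeff_C,
      (Polynomial.monic_X_sub_C (b j)).leadingCoeff, mul_one]
  rw [Finset.prod_congr rfl this, Finset.prod_inv_distrib, div_eq_mul_inv]

open Polynomial in
lemma moment_card_sub_one {n : ℕ} (b : Fin (n+1) → ℝ) (hb : Function.Injective b) :
    ∑ i, b i ^ n / ∏ j ∈ Finset.univ.erase i, (b i - b j) = 1 := by
  have hcard : (Finset.univ : Finset (Fin (n+1))).card = n + 1 := by simp
  have hdeg : (X ^ n : ℝ[X]).degree < (Finset.univ : Finset (Fin (n+1))).card := by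
    rw [hcard, Polynomial.degree_X_pow]
    exact_mod_cast Nat.lt_succ_self n
  have h := Lagrange.eq_interpolate (v := b) hb.injOn hdeg
  have h2 := congrArg (fun p => Polynomial.coeff p n) h
  rw [coeff_interpolate b hb] at h2
  simp only [Polynomial.coeff_X_pow, if_pos rfl, Polynomial.eval_pow, Polynomial.eval_X] at h2
  exact h2.symm

open Polynomial in
lemma moment_card {n : ℕ} (b : Fin (n+1) → ℝ) (hb : Function.Injective b) :
    ∑ i, b i ^ (n+1) / ∏ j ∈ Finset.univ.erase i, (b i - b j) = ∑ i, b i := by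
  have hcard : (Finset.univ : Finset (Fin (n+1))).card = n + 1 := by simp
  set q : ℝ[X] := ∏ i : Fin (n+1), (X - C (b i)) with hq
  have hqmonic : q.Monic := monic_prod_of_monic _ _ fun i _ => monic_X_sub_C (b i)
  have hqdeg : q.natDegree = n + 1 := by
    rw [hq, Polynomial.natDegree_prod _ _ (fun i _ => X_sub_C_ne_zero (b i))]
    simp
  have hqne : q ≠ 0 := hqmonic.ne_zero
  set f : ℝ[X] := X ^ (n+1) - q with hf
  have hdegf : f.degree < (Finset.univ : Finset (Fin (n+1))).card := by
    rw [hcard, hf]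
    have h2 : q.degree = (X ^ (n+1) : ℝ[X]).degree := by
      rw [Polynomial.degree_eq_natDegree hqne, hqdeg, Polynomial.degree_X_pow]
    calc (X ^ (n+1) - q : ℝ[X]).degree
        < (X ^ (n+1) : ℝ[X]).degree := by
          refine Polynomial.degree_sub_lt h2.symm (pow_ne_zero _ Polynomial.X_ne_zero) ?_
          rw [Polynomial.leadingCoeff_X_pow, hqmonic.leadingCoeff]
      _ ≤ ((n+1 : ℕ) : WithBot ℕ) := by rw [Polynomial.degree_X_pow]
  have h := Lagrange.eq_interpolate (v := b) hb.injOn hdegf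
  have h2 := congrArg (fun p => Polynomial.coeff p n) h
  rw [coeff_interpolate b hb] at h2
  have hevalq : ∀ i : Fin (n+1), q.eval (b i) = 0 := by
    intro i
    rw [hq, Polynomial.eval_prod]
    exact Finset.prod_eq_zero (Finset.mem_univ i) (by simp)
  have hcoeffq : q.coeff n = -∑ i, b i := by
    have := Polynomial.prod_X_sub_C_coeff_card_pred (Finset.univ : Finset (Fin (n+1))) b
      (by rw [hcard]; omega)
    rw [hcard] at this
    simpa [hq] using this
  have hcoefff : f.coeff n = ∑ i, b i := by
    rw [hf, Polynomial.coeff_sub, Polynomial.coeff_X_pow, hcoeffq]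
    simp
  rw [hcoefff] at h2
  have heval : ∀ i : Fin (n+1), f.eval (b i) = b i ^ (n+1) := by
    intro i
    rw [hf, Polynomial.eval_sub, Polynomial.eval_pow, Polynomial.eval_X, hevalq, sub_zero]
  rw [h2]
  refine Finset.sum_congr rfl fun i _ => ?_
  rw [heval]

def Tset (n : ℕ) : Set (Fin n → ℝ) := {x | (∀ j, 0 ≤ x j) ∧ ∑ j, x j ≤ 1}

lemma isClosed_Tset (n : ℕ) : IsClosed (Tset n) := by
  have h1 : Tset n = (⋂ j, {x : Fin n → ℝ | 0 ≤ x j}) ∩ {x | ∑ j, x j ≤ 1} := by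
    ext x; simp [Tset, Set.mem_iInter]
  rw [h1]
  exact IsClosed.inter (isClosed_iInter fun j =>
      isClosed_le continuous_const (continuous_apply j))
    (isClosed_le (continuous_finset_sum _ fun j _ => continuous_apply j) continuous_const)

lemma isCompact_Tset (n : ℕ) : IsCompact (Tset n) := by
  have hsub : Tset n ⊆ Set.pi Set.univ (fun _ : Fin n => Set.Icc (0:ℝ) 1) := by
    intro x hx
    intro j _
    refine ⟨hx.1 j, ?_⟩
    calc x j ≤ ∑ i, x i := Finset.single_le_sum (fun i _ => hx.1 i) (Finset.mem_univ j)
    _ ≤ 1 := hx.2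
  exact (isCompact_univ_pi fun _ => isCompact_Icc).of_isClosed_subset (isClosed_Tset n) hsub

lemma measurableSet_Tset (n : ℕ) : MeasurableSet (Tset n) := (isClosed_Tset n).measurableSet

lemma integrableOn_Tset {n : ℕ} {f : (Fin n → ℝ) → ℝ} (hf : Continuous f) :
    MeasureTheory.IntegrableOn f (Tset n) := by
  exact hf.continuousOn.integrableOn_compact (isCompact_Tset n)

lemma inner_slice (m : ℕ) (A c : ℝ) (hc : c ≠ 0) (s : ℝ) (hs : 0 ≤ s) :
    (∫ t in Set.Icc (0:ℝ) s, gg m (A + c * t))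
      = (gg (m+1) (A + c * s) - gg (m+1) A) / c := by
  have hcont : Continuous fun t : ℝ => gg m (A + c * t) :=
    (gg_continuous m).comp (continuous_const.add (continuous_const.mul continuous_id))
  rw [MeasureTheory.integral_Icc_eq_integral_Ioc, ← intervalIntegral.integral_of_le hs]
  have hderiv : ∀ t ∈ Set.uIcc (0:ℝ) s,
      HasDerivAt (fun t => gg (m+1) (A + c * t) / c) (gg m (A + c * t)) t := by
    intro t _
    have h1 : HasDerivAt (fun t : ℝ => A + c * t) c t := by
      simpa using ((hasDerivAt_id t).const_mul c).const_add A
    have h2 := (gg_hasDerivAt m (A + c * t)).comp t h1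
    have h3 := h2.div_const c
    convert h3 using 1
    · rfl
    · rfl
    · rfl
    field_simp
  rw [intervalIntegral.integral_eq_sub_of_hasDerivAt hderiv (hcont.intervalIntegrable _ _)]
  rw [mul_zero, add_zero, div_sub_div_same]

lemma inner_slice_neg (m : ℕ) (A c s : ℝ) (hs : s < 0) :
    (∫ t in Set.Icc (0:ℝ) s, gg m (A + c * t)) = 0 := by
  rw [Set.Icc_eq_empty (by linarith : ¬ (0:ℝ) ≤ s)]
  simp

theorem HG (n : ℕ) : ∀ (m : ℕ) (b : Fin (n+1) → ℝ), Function.Injective b →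
    (∫ x in Tset n, gg m (b (Fin.last n) + ∑ i : Fin n, (b i.castSucc - b (Fin.last n)) * x i))
      = dd (gg (m+n)) b Finset.univ := by
  induction n with
  | zero =>
    intro m b _
    have h1 : Tset 0 = Set.univ := by
      ext x
      simp [Tset]
    have hconst : (fun x : Fin 0 → ℝ =>
        gg m (b (Fin.last 0) + ∑ i : Fin 0, (b i.castSucc - b (Fin.last 0)) * x i))
        = fun _ => gg m (b (Fin.last 0)) := by
      funext x
      simp
    have h2 : (volume : Measure (Fin 0 → ℝ)) Set.univ = 1 := by
      rw [volume_pi, MeasureTheory.Measure.pi_univ]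
      simp
    calc (∫ x in Tset 0, gg m (b (Fin.last 0) + ∑ i : Fin 0, (b i.castSucc - b (Fin.last 0)) * x i))
        = ∫ _x : Fin 0 → ℝ, gg m (b (Fin.last 0)) := by
          rw [h1, MeasureTheory.Measure.restrict_univ]
          exact congrArg (fun (F : (Fin 0 → ℝ) → ℝ) => ∫ x, F x) hconst
      _ = gg m (b (Fin.last 0)) := by
          rw [MeasureTheory.integral_const, Measure.real, h2]
          simp
      _ = dd (gg (m+0)) b Finset.univ := by
          simp [dd]
  | succ n ih =>
    intro m b hb
    set lst : Fin (n+2) := Fin.last (n+1) with hlst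
    set p : Fin (n+2) := (Fin.last n).castSucc with hp
    have hplst : p ≠ lst := by
      simp only [hp, hlst, Fin.ne_iff_vne, Fin.coe_castSucc, Fin.val_last]
      omega
    set c : ℝ := b p - b lst with hc
    have hcne : c ≠ 0 := sub_ne_zero.mpr (fun h => hplst (hb h))
    set A : (Fin n → ℝ) → ℝ :=
      fun y => b lst + ∑ i : Fin n, (b i.castSucc.castSucc - b lst) * y i with hA
    set f : (Fin (n+1) → ℝ) → ℝ :=
      fun x => gg m (b lst + ∑ i : Fin (n+1), (b i.castSucc - b lst) * x i) with hf
    have hfcont : Continuous f := (gg_continuous m).comp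
      (continuous_const.add (continuous_finset_sum _ fun i _ =>
        continuous_const.mul (continuous_apply i)))
    have hInd : MeasureTheory.Integrable ((Tset (n+1)).indicator f) :=
      (MeasureTheory.integrable_indicator_iff (measurableSet_Tset _)).mpr
        (integrableOn_Tset hfcont)
    set e := MeasurableEquiv.piFinSuccAbove (fun _ : Fin (n+1) => ℝ) (Fin.last n) with he
    have hMP : MeasureTheory.MeasurePreserving e volume
        ((volume : Measure ℝ).prod (volume : Measure (Fin n → ℝ))) := by
      have h := MeasureTheory.measurePreserving_piFinSuccAbove
        (fun _ : Fin (n+1) => (volume : Measure ℝ)) (Fin.last n)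
      rw [volume_pi, volume_pi]
      exact h
    set G : ℝ × (Fin n → ℝ) → ℝ :=
      fun q => (Tset (n+1)).indicator f (Fin.snoc q.2 q.1) with hG
    have heG : ∀ x, (Tset (n+1)).indicator f x = G (e x) := by
      intro x
      have hx : (Fin.snoc (fun j => x ((Fin.last n).succAbove j)) (x (Fin.last n))
          : Fin (n+1) → ℝ) = x := by
        funext j
        induction j using Fin.lastCases with
        | last => simp
        | cast i => simp [Fin.succAbove_last_apply]
      simp only [hG, he, MeasurableEquiv.piFinSuccAbove_apply, Fin.insertNthEquiv_symm_apply]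
      rw [Fin.removeNth_last, Fin.snoc_init_self]
    have hGint : MeasureTheory.Integrable G
        ((volume : Measure ℝ).prod (volume : Measure (Fin n → ℝ))) := by
      rw [← hMP.integrable_comp_emb e.measurableEmbedding]
      have : G ∘ e = (Tset (n+1)).indicator f := by
        funext x
        exact (heG x).symm
      rw [this]
      exact hInd
    -- membership characterization
    have hmem : ∀ (y : Fin n → ℝ) (t : ℝ), (Fin.snoc y t ∈ Tset (n+1)) ↔
        ((∀ j, 0 ≤ y j) ∧ 0 ≤ t ∧ (∑ j, y j) + t ≤ 1) := by
      intro y t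
      have hsum : ∑ j : Fin (n+1), (Fin.snoc y t : Fin (n+1) → ℝ) j = (∑ j, y j) + t := by
        rw [Fin.sum_univ_castSucc]
        simp
      constructor
      · rintro ⟨hpos, hsle⟩
        rw [hsum] at hsle
        refine ⟨fun j => ?_, ?_, hsle⟩
        · have := hpos j.castSucc
          rwa [Fin.snoc_castSucc] at this
        · have := hpos (Fin.last n)
          rwa [Fin.snoc_last] at this
      · rintro ⟨hy, ht, hle⟩
        refine ⟨fun j => ?_, by rw [hsum]; exact hle⟩
        induction j using Fin.lastCases with
        | last => simpa using ht
        | cast i => simpa using hy i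
    -- value of f on snoc
    have hfval : ∀ (y : Fin n → ℝ) (t : ℝ), f (Fin.snoc y t) = gg m (A y + c * t) := by
      intro y t
      simp only [hf, hA]
      congr 1
      rw [Fin.sum_univ_castSucc]
      simp only [Fin.snoc_castSucc, Fin.snoc_last]
      rw [hc, hp]
      ring
    -- inner integral identity
    have hGind : ∀ y : Fin n → ℝ, (∫ t : ℝ, G (t, y))
        = (Tset n).indicator
            (fun y => (gg (m+1) (A y + c * (1 - ∑ j, y j)) - gg (m+1) (A y)) / c) y := by
      intro y
      by_cases hy1 : ∀ j, 0 ≤ y j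
      · have hGeq : (fun t => G (t, y))
            = Set.indicator (Set.Icc 0 (1 - ∑ j, y j)) (fun t => gg m (A y + c * t)) := by
          funext t
          simp only [hG]
          have hiff : (Fin.snoc y t ∈ Tset (n+1)) ↔ t ∈ Set.Icc (0:ℝ) (1 - ∑ j, y j) := by
            rw [hmem]
            simp only [Set.mem_Icc]
            constructor
            · rintro ⟨_, ht, hle⟩
              exact ⟨ht, by linarith⟩
            · rintro ⟨ht, hle⟩
              exact ⟨hy1, ht, by linarith⟩
          by_cases hmem' : Fin.snoc y t ∈ Tset (n+1)
          · rw [Set.indicator_of_mem hmem', Set.indicator_of_mem (hiff.mp hmem'), hfval]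
          · rw [Set.indicator_of_notMem hmem',
              Set.indicator_of_notMem (fun h => hmem' (hiff.mpr h))]
        rw [hGeq, MeasureTheory.integral_indicator measurableSet_Icc]
        by_cases hy2 : ∑ j, y j ≤ 1
        · rw [inner_slice m (A y) c hcne _ (by linarith)]
          have hymem : y ∈ Tset n := ⟨hy1, hy2⟩
          rw [Set.indicator_of_mem hymem]
        · rw [inner_slice_neg m (A y) c _ (by linarith)]
          rw [Set.indicator_of_notMem (fun h => hy2 h.2)]
      · have hGeq : ∀ t, G (t, y) = 0 := by
          intro t
          simp only [hG]
          refine Set.indicator_of_notMem (fun h => ?_) _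
          exact hy1 ((hmem y t).mp h).1
        rw [show (fun t => G (t, y)) = fun _ => (0:ℝ) from funext hGeq]
        rw [MeasureTheory.integral_zero]
        rw [Set.indicator_of_notMem (fun h => hy1 h.1)]
    -- chain of equalities
    have step1 : (∫ x in Tset (n+1),
        gg m (b (Fin.last (n+1)) + ∑ i : Fin (n+1), (b i.castSucc - b (Fin.last (n+1))) * x i))
        = ∫ y in Tset n,
            (gg (m+1) (A y + c * (1 - ∑ j, y j)) - gg (m+1) (A y)) / c := by
      calc (∫ x in Tset (n+1),
          gg m (b (Fin.last (n+1)) + ∑ i : Fin (n+1), (b i.castSucc - b (Fin.last (n+1))) * x i))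
          = ∫ x, (Tset (n+1)).indicator f x := by
            rw [MeasureTheory.integral_indicator (measurableSet_Tset _)]
        _ = ∫ x, G (e x) := by
            exact MeasureTheory.integral_congr_ae (Filter.Eventually.of_forall heG)
        _ = ∫ z, G z ∂((volume : Measure ℝ).prod (volume : Measure (Fin n → ℝ))) :=
            hMP.integral_comp e.measurableEmbedding G
        _ = ∫ y, ∫ t, G (t, y) := MeasureTheory.integral_prod_symm G hGint
        _ = ∫ y, (Tset n).indicator
              (fun y => (gg (m+1) (A y + c * (1 - ∑ j, y j)) - gg (m+1) (A y)) / c) y := by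
            exact MeasureTheory.integral_congr_ae (Filter.Eventually.of_forall hGind)
        _ = ∫ y in Tset n,
              (gg (m+1) (A y + c * (1 - ∑ j, y j)) - gg (m+1) (A y)) / c := by
            rw [MeasureTheory.integral_indicator (measurableSet_Tset _)]
    -- node maps for the induction hypothesis
    set b1 : Fin (n+1) → ℝ := fun i => b i.castSucc with hb1def
    set b2 : Fin (n+1) → ℝ := fun i => b (p.succAbove i) with hb2def
    have hb1 : Function.Injective b1 := fun i j h => Fin.castSucc_injective _ (hb h)
    have hb2 : Function.Injective b2 := fun i j h =>
      Fin.succAbove_right_injective (hb h)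
    have claim1 : ∀ y : Fin n → ℝ, A y + c * (1 - ∑ j, y j)
        = b1 (Fin.last n) + ∑ i : Fin n, (b1 i.castSucc - b1 (Fin.last n)) * y i := by
      intro y
      have hb1last : b1 (Fin.last n) = b p := by rw [hb1def]
      have hb1cs : ∀ i : Fin n, b1 i.castSucc = b i.castSucc.castSucc := fun i => by
        rw [hb1def]
      simp only [hb1last, hb1cs, hA]
      have h1 : (∑ i : Fin n, (b i.castSucc.castSucc - b lst) * y i)
          - ∑ i : Fin n, c * y i = ∑ i : Fin n, (b i.castSucc.castSucc - b p) * y i := by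
        rw [← Finset.sum_sub_distrib]
        refine Finset.sum_congr rfl fun i _ => ?_
        rw [hc]
        ring
      have h2 : c * (1 - ∑ j, y j) = c - ∑ j : Fin n, c * y j := by
        rw [mul_one_sub, Finset.mul_sum]
      rw [h2]
      rw [hc] at h1 ⊢
      linear_combination h1
    have claim2 : ∀ y : Fin n → ℝ, A y
        = b2 (Fin.last n) + ∑ i : Fin n, (b2 i.castSucc - b2 (Fin.last n)) * y i := by
      intro y
      have hb2last : b2 (Fin.last n) = b lst := by
        have hpa : p.succAbove (Fin.last n) = lst := by
          rw [hp, hlst, Fin.succAbove_castSucc_self, Fin.succ_last]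
        simp only [hb2def]
        rw [hpa]
      have hb2cs : ∀ i : Fin n, b2 i.castSucc = b i.castSucc.castSucc := by
        intro i
        have hpa : p.succAbove i.castSucc = i.castSucc.castSucc := by
          rw [hp]
          exact Fin.succAbove_castSucc_of_lt _ _ (Fin.castSucc_lt_last i)
        simp only [hb2def]
        rw [hpa]
      simp only [hb2last, hb2cs, hA]
    have hcont1 : Continuous fun y : Fin n → ℝ => gg (m+1) (A y + c * (1 - ∑ j, y j)) := by
      refine (gg_continuous (m+1)).comp ?_
      refine Continuous.add ?_ ?_
      · exact continuous_const.add (continuous_finset_sum _ fun i _ =>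
          continuous_const.mul (continuous_apply i))
      · exact continuous_const.mul (continuous_const.sub
          (continuous_finset_sum _ fun i _ => continuous_apply i))
    have hcont2 : Continuous fun y : Fin n → ℝ => gg (m+1) (A y) :=
      (gg_continuous (m+1)).comp (continuous_const.add
        (continuous_finset_sum _ fun i _ => continuous_const.mul (continuous_apply i)))
    have step2 : (∫ y in Tset n,
        (gg (m+1) (A y + c * (1 - ∑ j, y j)) - gg (m+1) (A y)) / c)
        = ((∫ y in Tset n, gg (m+1) (A y + c * (1 - ∑ j, y j)))
          - ∫ y in Tset n, gg (m+1) (A y)) / c := by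
      rw [MeasureTheory.integral_div]
      rw [MeasureTheory.integral_sub (integrableOn_Tset hcont1) (integrableOn_Tset hcont2)]
    have ih1 : (∫ y in Tset n, gg (m+1) (A y + c * (1 - ∑ j, y j)))
        = dd (gg (m+1+n)) b (Finset.univ.erase lst) := by
      have : (fun y : Fin n → ℝ => gg (m+1) (A y + c * (1 - ∑ j, y j)))
          = fun y => gg (m+1) (b1 (Fin.last n)
            + ∑ i : Fin n, (b1 i.castSucc - b1 (Fin.last n)) * y i) := by
        funext y
        rw [claim1 y]
      rw [this, ih (m+1) b1 hb1]
      have hb1e : b1 = fun i => b (lst.succAbove i) := by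
        funext i
        rw [hb1def, hlst, Fin.succAbove_last_apply]
      rw [hb1e, dd_comp_succAbove]
    have ih2 : (∫ y in Tset n, gg (m+1) (A y))
        = dd (gg (m+1+n)) b (Finset.univ.erase p) := by
      have : (fun y : Fin n → ℝ => gg (m+1) (A y))
          = fun y => gg (m+1) (b2 (Fin.last n)
            + ∑ i : Fin n, (b2 i.castSucc - b2 (Fin.last n)) * y i) := by
        funext y
        rw [claim2 y]
      rw [this, ih (m+1) b2 hb2]
      rw [hb2def, dd_comp_succAbove]
    rw [step1, step2, ih1, ih2]
    rw [show m + (n+1) = m+1+n by omega]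
    rw [dd_rec hb.injOn (Finset.mem_univ p) (Finset.mem_univ lst) hplst]



/-- For an N×N bi-stochastic matrix B whose rows have pairwise distinct
entries, `∫ H(Bλ) dμ_N(λ) = H_N - 1 + Q(Bᵀ)`. -/
theorem avg_entropy_bistochastic (N : ℕ) (hN : 1 ≤ N)
    (B : Matrix (Fin N) (Fin N) ℝ) (hB : IsBistochastic B)
    (hrows : ∀ i : Fin N, ∀ j k : Fin N, j ≠ k → B i j ≠ B i k) :
    simplexIntegral N (fun lam => shannonEntropy (B.mulVec lam)) =
      harmonicNum N - 1 + (1 / N) * ∑ i, subentropy (fun j => B i j) := by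
  obtain ⟨n, rfl⟩ : ∃ n, N = n + 1 := ⟨N - 1, (Nat.succ_pred_eq_of_pos hN).symm⟩
  obtain ⟨hBnn, hBrow, hBcol⟩ := hB
  have hinj : ∀ i : Fin (n+1), Function.Injective (fun j => B i j) := by
    intro i j k h
    by_contra hne
    exact hrows i j k hne h
  -- the solid simplex is `Tset n`
  have hSS : solidSimplex (n+1) = Tset n := rfl
  -- value of the matrix-vector product on the simplex parametrization
  have key : ∀ (x : Fin n → ℝ) (i : Fin (n+1)),
      B.mulVec (simplexMap (n+1) x) i
        = B i (Fin.last n) + ∑ j : Fin n, (B i j.castSucc - B i (Fin.last n)) * x j := by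
    intro x i
    have hsm1 : ∀ j : Fin n, simplexMap (n+1) x j.castSucc = x j := by
      intro j
      have hj : ((j.castSucc : Fin (n+1)) : ℕ) < n + 1 - 1 := by
        simpa using j.isLt
      rw [simplexMap, dif_pos hj]
      exact congrArg x (Fin.ext (by simp))
    have hsm2 : simplexMap (n+1) x (Fin.last n) = 1 - ∑ j, x j := by
      have hj : ¬ (((Fin.last n : Fin (n+1)) : ℕ) < n + 1 - 1) := by simp
      rw [simplexMap, dif_neg hj]
      rfl
    rw [Matrix.mulVec]
    unfold dotProduct
    rw [Fin.sum_univ_castSucc]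
    simp only [hsm1, hsm2]
    have h1 : (∑ j : Fin n, (B i j.castSucc - B i (Fin.last n)) * x j)
        = (∑ j : Fin n, B i j.castSucc * x j) - ∑ j : Fin n, B i (Fin.last n) * x j := by
      rw [← Finset.sum_sub_distrib]
      exact Finset.sum_congr rfl fun j _ => by ring
    have h2 : B i (Fin.last n) * (1 - ∑ j, x j)
        = B i (Fin.last n) - ∑ j : Fin n, B i (Fin.last n) * x j := by
      rw [mul_one_sub, Finset.mul_sum]
    rw [h2, h1]
    ring
  -- rewrite the integrand
  have hint : (fun x : Fin n → ℝ => shannonEntropy (B.mulVec (simplexMap (n+1) x)))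
      = fun x => ∑ i : Fin (n+1),
          gg 0 (B i (Fin.last n) + ∑ j : Fin n, (B i j.castSucc - B i (Fin.last n)) * x j) := by
    funext x
    rw [shannonEntropy]
    refine Finset.sum_congr rfl fun i _ => ?_
    rw [key x i, gg_zero]
  have hcont : ∀ i : Fin (n+1), Continuous fun x : Fin n → ℝ =>
      gg 0 (B i (Fin.last n) + ∑ j : Fin n, (B i j.castSucc - B i (Fin.last n)) * x j) :=
    fun i => (gg_continuous 0).comp (continuous_const.add
      (continuous_finset_sum _ fun j _ => continuous_const.mul (continuous_apply j)))
  -- swap sum and integral, apply HG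
  have hswap : (∫ x in Tset n, ∑ i : Fin (n+1),
      gg 0 (B i (Fin.last n) + ∑ j : Fin n, (B i j.castSucc - B i (Fin.last n)) * x j))
      = ∑ i : Fin (n+1), ∫ x in Tset n,
          gg 0 (B i (Fin.last n) + ∑ j : Fin n, (B i j.castSucc - B i (Fin.last n)) * x j) :=
    MeasureTheory.integral_finset_sum _ fun i _ => integrableOn_Tset (hcont i)
  have hHG : ∀ i : Fin (n+1), (∫ x in Tset n,
      gg 0 (B i (Fin.last n) + ∑ j : Fin n, (B i j.castSucc - B i (Fin.last n)) * x j))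
      = dd (gg n) (fun j => B i j) Finset.univ := by
    intro i
    have := HG n 0 (fun j => B i j) (hinj i)
    simpa using this
  -- evaluate the divided difference
  have hdd : ∀ i : Fin (n+1), dd (gg n) (fun j => B i j) Finset.univ
      = (subentropy (fun j => B i j) + (harmonicNum (n+1) - 1)) / (n+1).factorial := by
    intro i
    unfold dd subentropy
    have hterm : ∀ k : Fin (n+1),
        gg n (B i k) / ∏ j ∈ Finset.univ.erase k, (B i k - B i j)
        = ((1:ℝ)/(n+1).factorial) *
          (-(B i k ^ (n+1) * Real.log (B i k) / ∏ j ∈ Finset.univ.erase k, (B i k - B i j))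
           + (harmonicNum (n+1) - 1) * (B i k ^ (n+1) / ∏ j ∈ Finset.univ.erase k, (B i k - B i j))) := by
      intro k
      rw [gg]
      ring
    rw [Finset.sum_congr rfl fun k _ => hterm k, ← Finset.mul_sum]
    rw [Finset.sum_add_distrib, ← Finset.mul_sum, Finset.sum_neg_distrib]
    have hmom := moment_card (fun j => B i j) (hinj i)
    rw [hmom, hBrow i, mul_one]
    field_simp
  -- put everything together
  have hgoal : simplexIntegral (n+1) (fun lam => shannonEntropy (B.mulVec lam))
      = (n.factorial : ℝ) * ∫ x in Tset n, shannonEntropy (B.mulVec (simplexMap (n+1) x)) := rfl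
  rw [hgoal, hint, hswap]
  rw [Finset.sum_congr rfl fun i _ => (hHG i).trans (hdd i)]
  rw [← Finset.sum_div, Finset.sum_add_distrib, Finset.sum_const, Finset.card_univ,
    Fintype.card_fin]
  have hfact : ((n+1).factorial : ℝ) = (n+1) * n.factorial := by
    rw [Nat.factorial_succ]
    push_cast
    ring
  have hnf : (n.factorial : ℝ) ≠ 0 := by positivity
  have hn1 : ((n:ℝ)+1) ≠ 0 := by positivity
  rw [hfact]
  push_cast
  field_simp
  ring
end

section
/- Let N ≥ 1 and let B be any N×N bi-stochastic matrix. Then the average coherence gain over the uniform simplex measure lies between 0 and ln N − H_N + 1: 0 ≤ ∫ [H(Bλ) − H(λ)] dμ_N(λ) ≤ ln N − H_N + 1, where H_N = Σ_{j=1}^N 1/j. In particular, the coherence generating power of any N×N unitary channel takes values in the closed interval [0, ln N − H_N + 1]. -/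
open MeasureTheory Real

namespace CGP

open Set Pointwise



def S (n : ℕ) : Set (Fin n → ℝ) := {x | (∀ j, 0 ≤ x j) ∧ ∑ j, x j ≤ 1}

lemma isClosed_S (n : ℕ) : IsClosed (S n) := by
  have h1 : S n = (⋂ j, {x : Fin n → ℝ | 0 ≤ x j}) ∩ {x | ∑ j, x j ≤ 1} := by
    ext x; simp [S, Set.mem_iInter]
  rw [h1]
  exact (isClosed_iInter fun j => isClosed_le continuous_const (continuous_apply j)).inter
    (isClosed_le (by fun_prop) continuous_const)

lemma measurableSet_S (n : ℕ) : MeasurableSet (S n) := (isClosed_S n).measurableSet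

lemma isCompact_S (n : ℕ) : IsCompact (S n) := by
  refine (isCompact_Icc (a := (0 : Fin n → ℝ)) (b := 1)).of_isClosed_subset (isClosed_S n) ?_
  intro x hx
  refine ⟨fun j => hx.1 j, fun j => ?_⟩
  calc x j ≤ ∑ i, x i := Finset.single_le_sum (f := x) (fun i _ => hx.1 i) (Finset.mem_univ j)
  _ ≤ 1 := hx.2

/-- slice membership -/
lemma cons_mem_S {n : ℕ} (t : ℝ) (y : Fin n → ℝ) :
    Fin.cons t y ∈ S (n+1) ↔ (0 ≤ t ∧ (∀ j, 0 ≤ y j) ∧ t + ∑ j, y j ≤ 1) := by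
  simp only [S, Set.mem_setOf_eq, Fin.forall_fin_succ, Fin.cons_zero, Fin.cons_succ,
    Fin.sum_cons]
  tauto

/-- the slice set equals a rescaled simplex -/
lemma slice_eq_smul {n : ℕ} {c : ℝ} (hc : 0 < c) :
    {y : Fin n → ℝ | (∀ j, 0 ≤ y j) ∧ ∑ j, y j ≤ c} = c • S n := by
  ext y
  rw [Set.mem_smul_set_iff_inv_smul_mem₀ (ne_of_gt hc)]
  simp only [S, Set.mem_setOf_eq, Pi.smul_apply, smul_eq_mul]
  constructor
  · rintro ⟨h1, h2⟩
    refine ⟨fun j => mul_nonneg (by positivity) (h1 j), ?_⟩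
    rw [← Finset.mul_sum]
    rw [inv_mul_le_iff₀ hc, mul_one]
    exact h2
  · rintro ⟨h1, h2⟩
    rw [← Finset.mul_sum, inv_mul_le_iff₀ hc, mul_one] at h2
    refine ⟨fun j => ?_, h2⟩
    have h3 : 0 ≤ c * (c⁻¹ * y j) := mul_nonneg hc.le (h1 j)
    rwa [← mul_assoc, mul_inv_cancel₀ (ne_of_gt hc), one_mul] at h3

/-- Key slicing lemma. -/
lemma slice_integral (n : ℕ) (f : (Fin (n+1) → ℝ) → ℝ) (hf : Continuous f) :
    ∫ x in S (n+1), f x =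
      ∫ t in Ioo (0:ℝ) 1, ((1-t) ^ n * ∫ z in S n, f (Fin.cons t ((1-t) • z))) := by
  have hInt : IntegrableOn f (S (n+1)) :=
    hf.continuousOn.integrableOn_compact (isCompact_S (n+1))
  have hIndInt : Integrable ((S (n+1)).indicator f) := by
    rwa [integrable_indicator_iff (measurableSet_S (n+1))]
  have h1 : ∫ x in S (n+1), f x = ∫ x, (S (n+1)).indicator f x := by
    rw [integral_indicator (measurableSet_S (n+1))]
  set g := (S (n+1)).indicator f with hg
  have MP := (measurePreserving_piFinSuccAbove (fun _ : Fin (n+1) => (volume : Measure ℝ)) 0).symm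
  have hcons : ∀ p : ℝ × (Fin n → ℝ),
      (MeasurableEquiv.piFinSuccAbove (fun _ : Fin (n+1) => ℝ) 0).symm p = Fin.cons p.1 p.2 := by
    intro p
    simp [MeasurableEquiv.piFinSuccAbove_symm_apply, Fin.insertNthEquiv, Equiv.coe_fn_mk,
      Fin.insertNth_zero, Fin.zero_succAbove, cast_eq]
  have h2 : ∫ x, g x = ∫ p : ℝ × (Fin n → ℝ), g (Fin.cons p.1 p.2)
      ∂((volume : Measure ℝ).prod (Measure.pi fun _ => (volume : Measure ℝ))) := by
    rw [volume_pi, ← MP.integral_comp']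
    refine integral_congr_ae (Filter.Eventually.of_forall fun p => ?_)
    show g _ = g _
    rw [hcons p]
  have hcomp : Integrable (fun p : ℝ × (Fin n → ℝ) => g (Fin.cons p.1 p.2))
      ((volume : Measure ℝ).prod (Measure.pi fun _ => (volume : Measure ℝ))) := by
    rw [volume_pi] at hIndInt
    have hI := (MP.integrable_comp_emb (MeasurableEquiv.measurableEmbedding _)).2 hIndInt
    apply hI.congr
    refine Filter.Eventually.of_forall fun p => ?_
    show g _ = g _
    rw [hcons p]
  have h4 : ∫ p : ℝ × (Fin n → ℝ), g (Fin.cons p.1 p.2)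
      ∂((volume : Measure ℝ).prod (Measure.pi fun _ => (volume : Measure ℝ)))
      = ∫ t : ℝ, (∫ y, g (Fin.cons t y) ∂(Measure.pi fun _ => (volume : Measure ℝ))) := by
    exact MeasureTheory.integral_prod _ hcomp
  -- pointwise identification of the inner integral
  set RHS : ℝ → ℝ := (Ioo (0:ℝ) 1).indicator
      (fun t => (1-t) ^ n * ∫ z in S n, f (Fin.cons t ((1-t) • z))) with hRHS
  have hae : (fun t : ℝ => (∫ y, g (Fin.cons t y) ∂(Measure.pi fun _ => (volume : Measure ℝ))))
      =ᵐ[volume] RHS := by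
    have h01 : volume ({0, 1} : Set ℝ) = 0 := by
      rw [Set.insert_eq]
      exact measure_union_null (measure_singleton 0) (measure_singleton 1)
    filter_upwards [compl_mem_ae_iff.2 h01] with t ht
    simp only [Set.mem_compl_iff, Set.mem_insert_iff, Set.mem_singleton_iff, not_or] at ht
    obtain ⟨ht0, ht1⟩ := ht
    by_cases htI : t ∈ Ioo (0:ℝ) 1
    · -- main case
      have hc : (0:ℝ) < 1 - t := by linarith [htI.2]
      have hslice : ∀ y : Fin n → ℝ, g (Fin.cons t y) =
          ({y : Fin n → ℝ | (∀ j, 0 ≤ y j) ∧ ∑ j, y j ≤ 1 - t}).indicator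
            (fun y => f (Fin.cons t y)) y := by
        intro y
        have : Fin.cons t y ∈ S (n+1) ↔ y ∈ {y : Fin n → ℝ | (∀ j, 0 ≤ y j) ∧ ∑ j, y j ≤ 1-t} := by
          rw [cons_mem_S]
          simp only [Set.mem_setOf_eq]
          constructor
          · rintro ⟨_, h2, h3⟩; exact ⟨h2, by linarith⟩
          · rintro ⟨h2, h3⟩; exact ⟨htI.1.le, h2, by linarith⟩
        by_cases hmem : Fin.cons t y ∈ S (n+1)
        · rw [hg, Set.indicator_of_mem hmem, Set.indicator_of_mem (this.1 hmem)]
        · rw [hg, Set.indicator_of_notMem hmem,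
            Set.indicator_of_notMem (fun hy => hmem (this.2 hy))]
      have hmeas_slice : MeasurableSet {y : Fin n → ℝ | (∀ j, 0 ≤ y j) ∧ ∑ j, y j ≤ 1 - t} := by
        have : IsClosed {y : Fin n → ℝ | (∀ j, 0 ≤ y j) ∧ ∑ j, y j ≤ 1 - t} := by
          have h1 : {y : Fin n → ℝ | (∀ j, 0 ≤ y j) ∧ ∑ j, y j ≤ 1 - t} =
              (⋂ j, {y : Fin n → ℝ | 0 ≤ y j}) ∩ {y | ∑ j, y j ≤ 1 - t} := by
            ext y; simp [Set.mem_iInter]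
          rw [h1]
          exact (isClosed_iInter fun j => isClosed_le continuous_const (continuous_apply j)).inter
            (isClosed_le (by fun_prop) continuous_const)
        exact this.measurableSet
      calc ∫ y, g (Fin.cons t y) ∂(Measure.pi fun _ => (volume : Measure ℝ))
          = ∫ y, ({y : Fin n → ℝ | (∀ j, 0 ≤ y j) ∧ ∑ j, y j ≤ 1 - t}).indicator
              (fun y => f (Fin.cons t y)) y ∂(Measure.pi fun _ => (volume : Measure ℝ)) := by
            exact integral_congr_ae (Filter.Eventually.of_forall hslice)
        _ = ∫ y in {y : Fin n → ℝ | (∀ j, 0 ≤ y j) ∧ ∑ j, y j ≤ 1 - t},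
              f (Fin.cons t y) ∂(Measure.pi fun _ => (volume : Measure ℝ)) :=
            integral_indicator hmeas_slice
        _ = ∫ y in (1-t) • S n, f (Fin.cons t y) := by
            rw [slice_eq_smul hc, ← volume_pi]
        _ = (1-t) ^ n * ∫ z in S n, f (Fin.cons t ((1-t) • z)) := by
            have := MeasureTheory.Measure.setIntegral_comp_smul_of_pos (volume : Measure (Fin n → ℝ))
              (fun y => f (Fin.cons t y)) (S n) hc
            rw [Module.finrank_fin_fun] at this
            rw [this]
            rw [smul_eq_mul, ← mul_assoc]
            rw [mul_inv_cancel₀ (by positivity), one_mul]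
        _ = RHS t := by rw [hRHS, Set.indicator_of_mem htI]
    · -- zero case
      have hout : t < 0 ∨ 1 < t := by
        simp only [Set.mem_Ioo, not_and_or, not_lt] at htI
        rcases htI with h | h
        · left; exact lt_of_le_of_ne h ht0
        · right; exact lt_of_le_of_ne h (Ne.symm ht1)
      have hzero : ∀ y : Fin n → ℝ, g (Fin.cons t y) = 0 := by
        intro y
        rw [hg, Set.indicator_of_notMem]
        rw [cons_mem_S]
        rintro ⟨h1, h2, h3⟩
        have hsum : 0 ≤ ∑ j, y j := Finset.sum_nonneg fun j _ => h2 j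
        rcases hout with h | h
        · linarith
        · linarith
      rw [hRHS, Set.indicator_of_notMem htI]
      simp only [hzero]
      exact integral_zero _ _
  rw [h1, h2, h4, integral_congr_ae hae, hRHS, integral_indicator measurableSet_Ioo]


noncomputable def E (n : ℕ) (x : Fin n → ℝ) : ℝ :=
  (∑ i, Real.negMulLog (x i)) + Real.negMulLog (1 - ∑ i, x i)

lemma continuous_E (n : ℕ) : Continuous (E n) := by
  unfold E
  fun_prop

lemma integrableOn_S {n : ℕ} {f : (Fin n → ℝ) → ℝ} (hf : Continuous f) :
    IntegrableOn f (S n) := hf.continuousOn.integrableOn_compact (isCompact_S n)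

lemma volume_S_lt_top (n : ℕ) : volume (S n) < ⊤ := (isCompact_S n).measure_lt_top


open intervalIntegral in
lemma integral_pow_negMulLog (n : ℕ) :
    ∫ s in (0:ℝ)..1, s ^ n * Real.negMulLog s = 1 / (n + 2) ^ 2 := by
  set Φ : ℝ → ℝ := fun s => s ^ (n + 2) / (n + 2) ^ 2 + s ^ (n + 1) * Real.negMulLog s / (n + 2)
    with hΦ
  have hcont : ContinuousOn Φ (Icc 0 1) := by fun_prop
  have hderiv : ∀ s ∈ Ioo (0:ℝ) 1, HasDerivAt Φ (s ^ n * Real.negMulLog s) s := by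
    intro s hs
    have hs0 : s ≠ 0 := ne_of_gt hs.1
    have hΦ' : Φ = fun s => s ^ (n + 2) / (n + 2) ^ 2 - s ^ (n + 2) * Real.log s / (n + 2) := by
      funext t; simp only [hΦ, Real.negMulLog]; ring
    rw [hΦ']
    have h1 : HasDerivAt (fun s : ℝ => s ^ (n + 2)) ((n + 2) * s ^ (n + 1)) s := by
      simpa using hasDerivAt_pow (n + 2) s
    have h2 : HasDerivAt Real.log s⁻¹ s := Real.hasDerivAt_log hs0
    have h3 : HasDerivAt (fun s : ℝ => s ^ (n + 2) * Real.log s)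
        ((n + 2) * s ^ (n + 1) * Real.log s + s ^ (n + 2) * s⁻¹) s := h1.mul h2
    have h4 := (h1.div_const ((n + 2) ^ 2)).sub (h3.div_const (n + 2))
    refine h4.congr_deriv ?_
    have : s ^ (n + 2) * s⁻¹ = s ^ (n + 1) := by
      rw [pow_succ]; field_simp
    rw [this]
    simp only [Real.negMulLog]
    have hn : ((n : ℝ) + 2) ≠ 0 := by positivity
    field_simp
    ring
  have hint : IntervalIntegrable (fun s => s ^ n * Real.negMulLog s) volume 0 1 := by
    apply Continuous.intervalIntegrable; fun_prop
  have := integral_eq_sub_of_hasDeriv_right_of_le (by norm_num) hcont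
    (fun s hs => (hderiv s hs).hasDerivWithinAt) hint
  rw [this]
  simp [hΦ]



/-- key polynomial identity -/
lemma key_identity (n : ℕ) (t : ℝ) :
    (1 - t) ^ (n+1) * ((n+1) * t + 1) - 1 =
      -(t * ((∑ k ∈ Finset.range (n+1), (1 - t) ^ k) - (n+1) * (1 - t) ^ (n+1))) := by
  have h := geom_sum_mul (1 - t) (n + 1)
  have h2 : t * (∑ k ∈ Finset.range (n+1), (1 - t) ^ k) = 1 - (1 - t) ^ (n+1) := by
    have : (∑ k ∈ Finset.range (n+1), (1 - t) ^ k) * ((1 - t) - 1) = (1-t) ^ (n+1) - 1 := h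
    nlinarith [this]
  nlinarith [h2]

open intervalIntegral in
lemma integral_one_sub_pow_negMulLog (n : ℕ) :
    ∫ t in (0:ℝ)..1, (1 - t) ^ n * Real.negMulLog t =
      (harmonicNum (n + 2) - 1) / ((n + 1) * (n + 2)) := by
  set m : ℕ := n + 1 with hm
  set P : ℝ → ℝ := fun t => (∑ k ∈ Finset.range m, (1 - t) ^ k) - m * (1 - t) ^ m with hP
  set F : ℝ → ℝ := fun t => P t * Real.negMulLog t
      - (∑ k ∈ Finset.range m, (1 - t) ^ (k+1) / (k+1)) + m * (1 - t) ^ (m+1) / (m+1) with hF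
  have hcont : ContinuousOn F (Icc 0 1) := by
    apply Continuous.continuousOn
    unfold F P
    fun_prop
  have hderiv : ∀ t ∈ Ioo (0:ℝ) 1, HasDerivAt F
      (((n:ℝ)+1) * ((n:ℝ)+2) * ((1 - t) ^ n * Real.negMulLog t)) t := by
    intro t ht
    have ht0 : t ≠ 0 := ne_of_gt ht.1
    have hFalt : F = fun t => ((1 - t) ^ m * ((m:ℝ) * t + 1) - 1) * Real.log t
        - (∑ k ∈ Finset.range m, (1 - t) ^ (k+1) / (k+1)) + m * (1 - t) ^ (m+1) / (m+1) := by
      funext s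
      have hks := key_identity n s
      simp only [hF, hP, Real.negMulLog, hm]
      push_cast at hks ⊢
      linear_combination (-(Real.log s)) * hks
    rw [hFalt]
    have h1t : HasDerivAt (fun t : ℝ => 1 - t) (-1) t := (hasDerivAt_id t).const_sub 1
    have hpow : HasDerivAt (fun t : ℝ => (1 - t) ^ m) (((m:ℝ) * (1-t) ^ (m-1)) * (-1)) t :=
      h1t.pow m
    have hlin : HasDerivAt (fun t : ℝ => (m:ℝ) * t + 1) m t := by
      simpa using ((hasDerivAt_id t).const_mul (m:ℝ)).add_const 1
    have hq : HasDerivAt (fun t : ℝ => (1 - t) ^ m * ((m:ℝ) * t + 1))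
        ((((m:ℝ) * (1-t) ^ (m-1)) * (-1)) * ((m:ℝ) * t + 1) + (1 - t) ^ m * m) t :=
      hpow.mul hlin
    have hlog : HasDerivAt Real.log t⁻¹ t := Real.hasDerivAt_log ht0
    have hterm1 : HasDerivAt (fun t : ℝ => ((1 - t) ^ m * ((m:ℝ) * t + 1) - 1) * Real.log t)
        (((((m:ℝ) * (1-t) ^ (m-1)) * (-1)) * ((m:ℝ) * t + 1) + (1 - t) ^ m * m) * Real.log t
          + ((1 - t) ^ m * ((m:ℝ) * t + 1) - 1) * t⁻¹) t := (hq.sub_const 1).mul hlog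
    have hsum : HasDerivAt (fun t : ℝ => ∑ k ∈ Finset.range m, (1 - t) ^ (k+1) / (k+1))
        (∑ k ∈ Finset.range m, -(1 - t) ^ k) t := by
      apply HasDerivAt.fun_sum
      intro k _
      have h1 : HasDerivAt (fun t : ℝ => (1 - t) ^ (k+1)) ((((k:ℝ)+1) * (1-t) ^ k) * (-1)) t := by
        simpa using h1t.fun_pow (k+1)
      have := h1.div_const ((k:ℝ)+1)
      refine this.congr_deriv ?_
      have : ((k:ℝ)+1) ≠ 0 := by positivity
      field_simp
    have hlast : HasDerivAt (fun t : ℝ => (m:ℝ) * (1 - t) ^ (m+1) / (m+1))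
        (-((m:ℝ) * (1 - t) ^ m)) t := by
      have h1 : HasDerivAt (fun t : ℝ => (1 - t) ^ (m+1)) ((((m:ℝ)+1) * (1-t) ^ m) * (-1)) t := by
        simpa using h1t.fun_pow (m+1)
      have := (h1.const_mul (m:ℝ)).div_const ((m:ℝ)+1)
      refine this.congr_deriv ?_
      have : ((m:ℝ)+1) ≠ 0 := by positivity
      field_simp
    have hD := (hterm1.sub hsum).add hlast
    refine hD.congr_deriv ?_
    have hkey := key_identity n t
    have hfrac : ((1 - t) ^ m * ((m:ℝ) * t + 1) - 1) * t⁻¹ = -(P t) := by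
      rw [hP, hm]
      push_cast
      rw [show ((1:ℝ) - t) ^ (n+1) * (((n:ℝ)+1) * t + 1) - 1
          = -(t * ((∑ k ∈ Finset.range (n+1), (1 - t) ^ k) - ((n:ℝ)+1) * (1 - t) ^ (n+1))) from by
        push_cast at hkey; linarith [hkey]]
      field_simp
    rw [hfrac, hP]
    simp only [hm]
    simp only [Nat.add_sub_cancel]
    push_cast
    rw [Real.negMulLog]
    simp only [Finset.sum_neg_distrib]
    ring
  have hint : IntervalIntegrable
      (fun t => ((n:ℝ)+1) * ((n:ℝ)+2) * ((1 - t) ^ n * Real.negMulLog t)) volume 0 1 := by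
    apply Continuous.intervalIntegrable; fun_prop
  have hFTC := integral_eq_sub_of_hasDeriv_right_of_le (by norm_num) hcont
    (fun t ht => (hderiv t ht).hasDerivWithinAt) hint
  have hF1 : F 1 = 0 := by
    simp only [hF, hP]
    norm_num
  have hF0 : F 0 = -(harmonicNum m) + m / (m + 1) := by
    simp only [hF, hP]
    rw [show Real.negMulLog 0 = 0 from Real.negMulLog_zero]
    rw [harmonicNum]
    push_cast
    simp
  have hmain : ∫ t in (0:ℝ)..1, ((n:ℝ)+1) * ((n:ℝ)+2) * ((1 - t) ^ n * Real.negMulLog t)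
      = harmonicNum m - m / (m+1) := by
    rw [hFTC, hF1, hF0]; ring
  rw [intervalIntegral.integral_const_mul] at hmain
  have hne : ((n:ℝ)+1) * ((n:ℝ)+2) ≠ 0 := by positivity
  have hval : harmonicNum (n+2) - 1 = harmonicNum m - m/(m+1) := by
    rw [hm, harmonicNum, harmonicNum, Finset.sum_range_succ]
    push_cast
    field_simp
    ring
  rw [hval]
  field_simp at hmain ⊢
  linarith [hmain]


open intervalIntegral in
lemma integral_Ioo_one_sub_pow (k : ℕ) :
    ∫ t in Ioo (0:ℝ) 1, (1 - t) ^ k = 1 / (k + 1) := by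
  rw [← MeasureTheory.integral_Ioc_eq_integral_Ioo,
    ← integral_of_le (by norm_num : (0:ℝ) ≤ 1)]
  rw [integral_comp_sub_left (fun s => s ^ k) 1]
  rw [integral_pow]
  norm_num

open intervalIntegral in
lemma integral_Ioo_A (n : ℕ) : ∫ t in Ioo (0:ℝ) 1, (1-t) ^ n * Real.negMulLog t
    = (harmonicNum (n + 2) - 1) / ((n + 1) * (n + 2)) := by
  rw [← MeasureTheory.integral_Ioc_eq_integral_Ioo,
    ← integral_of_le (by norm_num : (0:ℝ) ≤ 1)]
  exact integral_one_sub_pow_negMulLog n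

open intervalIntegral in
lemma integral_Ioo_B (n : ℕ) : ∫ t in Ioo (0:ℝ) 1, (1-t) ^ n * Real.negMulLog (1-t)
    = 1 / (n+2)^2 := by
  rw [← MeasureTheory.integral_Ioc_eq_integral_Ioo,
    ← integral_of_le (by norm_num : (0:ℝ) ≤ 1)]
  rw [integral_comp_sub_left (fun s => s ^ n * Real.negMulLog s) 1]
  norm_num [integral_pow_negMulLog n]

lemma vol_S (n : ℕ) : ∫ x in S n, (1:ℝ) = 1 / n.factorial := by
  induction n with
  | zero =>
    have hS : S 0 = Set.univ := by
      ext x; simp [S]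
    rw [hS, Measure.restrict_univ, integral_const, smul_eq_mul, mul_one]
    simp [volume_pi, Measure.real, Measure.pi_univ]
  | succ n ih =>
    rw [slice_integral n (fun _ => (1:ℝ)) continuous_const]
    simp only [ih]
    rw [show (fun t : ℝ => (1-t) ^ n * (1 / n.factorial))
        = fun t : ℝ => (1 / n.factorial) * (1-t) ^ n from by funext t; ring]
    rw [integral_const_mul, integral_Ioo_one_sub_pow n]
    rw [Nat.factorial_succ]
    push_cast
    have h1 : (n.factorial : ℝ) ≠ 0 := by positivity
    field_simp

lemma vol_S' (n : ℕ) : (volume (S n)).toReal = 1 / n.factorial := by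
  have := vol_S n
  rwa [setIntegral_const, smul_eq_mul, mul_one] at this

lemma E_cons (n : ℕ) (t : ℝ) (z : Fin n → ℝ) :
    E (n+1) (Fin.cons t ((1-t) • z)) =
      (Real.negMulLog t + Real.negMulLog (1-t)) + (1-t) * E n z := by
  have hsum : ∑ i, ((1-t) • z) i = (1-t) * ∑ i, z i := by
    simp [Finset.mul_sum]
  have harg : (1:ℝ) - (t + ∑ i, ((1-t) • z) i) = (1-t) * (1 - ∑ i, z i) := by
    rw [hsum]; ring
  unfold E
  rw [Fin.sum_univ_succ]
  simp only [Fin.cons_zero, Fin.cons_succ, Fin.sum_cons]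
  rw [harg, Real.negMulLog_mul]
  have hterm : ∀ i : Fin n, Real.negMulLog (((1-t) • z) i)
      = z i * Real.negMulLog (1-t) + (1-t) * Real.negMulLog (z i) := by
    intro i
    simp only [Pi.smul_apply, smul_eq_mul]
    rw [Real.negMulLog_mul]
  rw [Finset.sum_congr rfl fun i _ => hterm i, Finset.sum_add_distrib, ← Finset.sum_mul,
    ← Finset.mul_sum]
  ring

lemma ent_S (n : ℕ) : ∫ x in S n, E n x = (harmonicNum (n+1) - 1) / n.factorial := by
  induction n with
  | zero =>
    have hE : ∀ x : Fin 0 → ℝ, E 0 x = 0 := by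
      intro x; simp [E]
    rw [show (fun x : Fin 0 → ℝ => E 0 x) = fun _ => (0:ℝ) from funext hE]
    simp [harmonicNum]
  | succ n ih =>
    rw [slice_integral n (E (n+1)) (continuous_E (n+1))]
    have hinner : ∀ t ∈ Ioo (0:ℝ) 1, ∫ z in S n, E (n+1) (Fin.cons t ((1-t) • z))
        = (Real.negMulLog t + Real.negMulLog (1-t)) * (1 / n.factorial)
          + (1-t) * ((harmonicNum (n+1) - 1) / n.factorial) := by
      intro t _
      rw [show (fun z => E (n+1) (Fin.cons t ((1-t) • z)))
          = fun z => (Real.negMulLog t + Real.negMulLog (1-t)) + (1-t) * E n z from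
        funext fun z => E_cons n t z]
      rw [integral_add (integrableOn_const (C := Real.negMulLog t + Real.negMulLog (1-t)) (volume_S_lt_top n).ne)
        ((integrableOn_S (continuous_E n)).const_mul _), integral_const_mul, ih,
        setIntegral_const, smul_eq_mul, measureReal_def, vol_S' n]
      ring
    rw [setIntegral_congr_fun measurableSet_Ioo
      (fun t ht => by rw [hinner t ht])]
    have hsplit : ∀ t : ℝ, (1-t) ^ n *
        ((Real.negMulLog t + Real.negMulLog (1-t)) * (1 / n.factorial)
          + (1-t) * ((harmonicNum (n+1) - 1) / n.factorial))
        = (1 / n.factorial) * ((1-t) ^ n * Real.negMulLog t)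
          + (1 / n.factorial) * ((1-t) ^ n * Real.negMulLog (1-t))
          + ((harmonicNum (n+1) - 1) / n.factorial) * (1-t) ^ (n+1) := by
      intro t; ring
    simp only [hsplit]
    have hi1 : IntegrableOn (fun t : ℝ => (1 / n.factorial : ℝ) * ((1-t) ^ n * Real.negMulLog t))
        (Ioo 0 1) :=
      ((Continuous.integrableOn_Icc (a := 0) (b := 1) (by fun_prop)).mono_set
        Set.Ioo_subset_Icc_self)
    have hi2 : IntegrableOn
        (fun t : ℝ => (1 / n.factorial : ℝ) * ((1-t) ^ n * Real.negMulLog (1-t)))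
        (Ioo 0 1) :=
      ((Continuous.integrableOn_Icc (a := 0) (b := 1) (by fun_prop)).mono_set
        Set.Ioo_subset_Icc_self)
    have hi3 : IntegrableOn
        (fun t : ℝ => ((harmonicNum (n+1) - 1) / n.factorial : ℝ) * (1-t) ^ (n+1))
        (Ioo 0 1) :=
      ((Continuous.integrableOn_Icc (a := 0) (b := 1) (by fun_prop)).mono_set
        Set.Ioo_subset_Icc_self)
    have hi12 : IntegrableOn (fun t : ℝ =>
        (1 / n.factorial : ℝ) * ((1-t) ^ n * Real.negMulLog t)
          + (1 / n.factorial : ℝ) * ((1-t) ^ n * Real.negMulLog (1-t))) (Ioo 0 1) := hi1.add hi2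
    rw [integral_add hi12 hi3, integral_add hi1 hi2]
    rw [integral_const_mul, integral_const_mul, integral_const_mul]
    have e1 := integral_Ioo_A n
    have e2 := integral_Ioo_B n
    have e3 : ∫ t in Ioo (0:ℝ) 1, (1-t) ^ (n+1) = 1 / (n+2) := by
      rw [integral_Ioo_one_sub_pow (n+1)]; push_cast; ring
    rw [e1, e2, e3]
    have hH : harmonicNum (n+2) = harmonicNum (n+1) + 1/(n+2) := by
      rw [harmonicNum, harmonicNum, Finset.sum_range_succ]
      push_cast
      ring
    rw [Nat.factorial_succ, hH]
    have h1 : (n.factorial : ℝ) ≠ 0 := by positivity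
    push_cast
    field_simp
    ring



lemma entropy_le_log {N : ℕ} (hN : 1 ≤ N) (p : Fin N → ℝ) (h0 : ∀ i, 0 ≤ p i)
    (h1 : ∑ i, p i = 1) : shannonEntropy p ≤ Real.log N := by
  have hNpos : (0:ℝ) < N := by exact_mod_cast hN
  have hJ := Real.concaveOn_negMulLog.le_map_sum (t := Finset.univ)
    (w := fun _ : Fin N => ((N:ℝ))⁻¹) (p := p)
    (fun i _ => by positivity)
    (by rw [Finset.sum_const]; simp; field_simp)
    (fun i _ => h0 i)
  simp only [smul_eq_mul] at hJ
  have hsum : ∑ i, ((N:ℝ))⁻¹ * p i = ((N:ℝ))⁻¹ := by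
    rw [← Finset.mul_sum, h1, mul_one]
  rw [hsum] at hJ
  have hval : Real.negMulLog ((N:ℝ))⁻¹ = ((N:ℝ))⁻¹ * Real.log N := by
    rw [Real.negMulLog, Real.log_inv]; ring
  rw [hval] at hJ
  rw [← Finset.mul_sum] at hJ
  have := (mul_le_mul_iff_right₀ (by positivity : (0:ℝ) < ((N:ℝ))⁻¹)).1 hJ
  rwa [shannonEntropy]

lemma entropy_mulVec_ge {N : ℕ} (B : Matrix (Fin N) (Fin N) ℝ) (hB : IsBistochastic B)
    (p : Fin N → ℝ) (h0 : ∀ i, 0 ≤ p i) :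
    shannonEntropy p ≤ shannonEntropy (B.mulVec p) := by
  obtain ⟨hBnn, hBrow, hBcol⟩ := hB
  have hstep : ∀ i, ∑ j, B i j * Real.negMulLog (p j) ≤ Real.negMulLog (B.mulVec p i) := by
    intro i
    have hJ := Real.concaveOn_negMulLog.le_map_sum (t := Finset.univ)
      (w := fun j => B i j) (p := p) (fun j _ => hBnn i j) (hBrow i) (fun j _ => h0 j)
    simp only [smul_eq_mul] at hJ
    have hmv : B.mulVec p i = ∑ j, B i j * p j := by simp [Matrix.mulVec, dotProduct]
    rw [hmv]
    exact hJ
  calc shannonEntropy p = ∑ j, (∑ i, B i j) * Real.negMulLog (p j) := by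
        rw [shannonEntropy]
        congr 1
        funext j
        rw [hBcol j, one_mul]
    _ = ∑ i, ∑ j, B i j * Real.negMulLog (p j) := by
        rw [Finset.sum_comm]
        congr 1
        funext j
        rw [Finset.sum_mul]
    _ ≤ ∑ i, Real.negMulLog (B.mulVec p i) := Finset.sum_le_sum fun i _ => hstep i
    _ = shannonEntropy (B.mulVec p) := rfl

lemma mulVec_nonneg {N : ℕ} (B : Matrix (Fin N) (Fin N) ℝ) (hB : IsBistochastic B)
    (p : Fin N → ℝ) (h0 : ∀ i, 0 ≤ p i) : ∀ i, 0 ≤ B.mulVec p i := by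
  intro i
  have : B.mulVec p i = ∑ j, B i j * p j := by simp [Matrix.mulVec, dotProduct]
  rw [this]
  exact Finset.sum_nonneg fun j _ => mul_nonneg (hB.1 i j) (h0 j)

lemma mulVec_sum_one {N : ℕ} (B : Matrix (Fin N) (Fin N) ℝ) (hB : IsBistochastic B)
    (p : Fin N → ℝ) (h1 : ∑ i, p i = 1) : ∑ i, B.mulVec p i = 1 := by
  have : ∀ i, B.mulVec p i = ∑ j, B i j * p j := by
    intro i; simp [Matrix.mulVec, dotProduct]
  simp only [this]
  rw [Finset.sum_comm]
  calc ∑ j, ∑ i, B i j * p j = ∑ j, (∑ i, B i j) * p j := by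
        congr 1; funext j; rw [Finset.sum_mul]
    _ = ∑ j, p j := by
        congr 1; funext j; rw [hB.2.2 j, one_mul]
    _ = 1 := h1


lemma simplexMap_castSucc {n : ℕ} (x : Fin n → ℝ) (i : Fin n) :
    simplexMap (n+1) x (Fin.castSucc i) = x i := by
  simp [simplexMap]

lemma simplexMap_last {n : ℕ} (x : Fin n → ℝ) :
    simplexMap (n+1) x (Fin.last n) = 1 - ∑ j, x j := by
  simp [simplexMap]

lemma simplexMap_nonneg {n : ℕ} {x : Fin n → ℝ} (hx : x ∈ S n) :
    ∀ i, 0 ≤ simplexMap (n+1) x i := by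
  intro i
  simp only [simplexMap]
  split
  · exact hx.1 _
  · exact sub_nonneg.2 hx.2

lemma simplexMap_sum {n : ℕ} (x : Fin n → ℝ) :
    ∑ i, simplexMap (n+1) x i = 1 := by
  rw [Fin.sum_univ_castSucc]
  simp only [simplexMap_castSucc, simplexMap_last]
  ring

lemma shannonEntropy_simplexMap {n : ℕ} (x : Fin n → ℝ) :
    shannonEntropy (simplexMap (n+1) x) = E n x := by
  rw [shannonEntropy, Fin.sum_univ_castSucc]
  simp only [simplexMap_castSucc, simplexMap_last, E]

lemma continuous_simplexMap (n : ℕ) : Continuous (simplexMap (n+1)) := by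
  apply continuous_pi
  intro i
  simp only [simplexMap]
  by_cases h : (i : ℕ) < (n+1) - 1
  · simp only [dif_pos h]
    exact continuous_apply _
  · simp only [dif_neg h]
    fun_prop

lemma continuous_shannonEntropy (N : ℕ) : Continuous (fun p : Fin N → ℝ => shannonEntropy p) := by
  unfold shannonEntropy
  fun_prop

lemma continuous_mulVec {N : ℕ} (B : Matrix (Fin N) (Fin N) ℝ) :
    Continuous (fun v : Fin N → ℝ => B.mulVec v) := by
  apply continuous_pi
  intro i
  have : (fun v : Fin N → ℝ => B.mulVec v i) = fun v => ∑ j, B i j * v j := by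
    funext v; simp [Matrix.mulVec, dotProduct]
  rw [this]
  fun_prop

end CGP

/-- for any N×N bi-stochastic matrix, the average coherence gain lies in
`[0, ln N - H_N + 1]`. -/
theorem cgp_range (N : ℕ) (hN : 1 ≤ N)
    (B : Matrix (Fin N) (Fin N) ℝ) (hB : IsBistochastic B) :
    0 ≤ simplexIntegral N (fun lam => shannonEntropy (B.mulVec lam) - shannonEntropy lam) ∧
    simplexIntegral N (fun lam => shannonEntropy (B.mulVec lam) - shannonEntropy lam) ≤
      Real.log N - harmonicNum N + 1 := by
  classical
  obtain ⟨n, rfl⟩ : ∃ n, N = n + 1 := ⟨N - 1, (Nat.succ_pred_eq_of_pos hN).symm⟩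
  have hsolid : solidSimplex (n+1) = CGP.S n := rfl
  set f1 : (Fin n → ℝ) → ℝ := fun x => shannonEntropy (B.mulVec (simplexMap (n+1) x)) with hf1
  set f2 : (Fin n → ℝ) → ℝ := fun x => shannonEntropy (simplexMap (n+1) x) with hf2
  have hcont1 : Continuous f1 :=
    (CGP.continuous_shannonEntropy (n+1)).comp
      ((CGP.continuous_mulVec B).comp (CGP.continuous_simplexMap n))
  have hcont2 : Continuous f2 :=
    (CGP.continuous_shannonEntropy (n+1)).comp (CGP.continuous_simplexMap n)
  have hi1 : IntegrableOn f1 (CGP.S n) := CGP.integrableOn_S hcont1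
  have hi2 : IntegrableOn f2 (CGP.S n) := CGP.integrableOn_S hcont2
  have hfact : ((n + 1 - 1).factorial : ℝ) = (n.factorial : ℝ) := by norm_num
  have hsimpint : simplexIntegral (n+1)
      (fun lam => shannonEntropy (B.mulVec lam) - shannonEntropy lam)
      = (n.factorial : ℝ) * ∫ x in CGP.S n, (f1 x - f2 x) := by
    rw [simplexIntegral, hfact, hsolid]
    rfl
  have hf2int : ∫ x in CGP.S n, f2 x = (harmonicNum (n+1) - 1) / n.factorial := by
    have : f2 = CGP.E n := funext fun x => CGP.shannonEntropy_simplexMap x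
    rw [this]
    exact CGP.ent_S n
  have hfnonneg : ∀ x ∈ CGP.S n, 0 ≤ f1 x - f2 x := by
    intro x hx
    have h0 := CGP.simplexMap_nonneg hx
    exact sub_nonneg.2 (CGP.entropy_mulVec_ge B hB _ h0)
  have hnn : 0 ≤ ∫ x in CGP.S n, (f1 x - f2 x) :=
    setIntegral_nonneg (CGP.measurableSet_S n) hfnonneg
  constructor
  · rw [hsimpint]
    exact mul_nonneg (by positivity) hnn
  · rw [hsimpint]
    have hfne : (n.factorial : ℝ) ≠ 0 := by positivity
    have hcast : ((n:ℝ) + 1) = ((n+1 : ℕ) : ℝ) := by push_cast; ring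
    have hsub : ∫ x in CGP.S n, (f1 x - f2 x)
        = (∫ x in CGP.S n, f1 x) - ∫ x in CGP.S n, f2 x := integral_sub hi1 hi2
    have hub : ∫ x in CGP.S n, f1 x ≤ (1 / n.factorial : ℝ) * Real.log (n+1) := by
      have hle : ∀ x ∈ CGP.S n, f1 x ≤ Real.log (n+1) := by
        intro x hx
        have h0 := CGP.simplexMap_nonneg hx
        have h1 := CGP.simplexMap_sum x
        have := CGP.entropy_le_log (N := n+1) (by omega)
          (B.mulVec (simplexMap (n+1) x))
          (CGP.mulVec_nonneg B hB _ h0) (CGP.mulVec_sum_one B hB _ h1)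
        exact_mod_cast this
      calc ∫ x in CGP.S n, f1 x ≤ ∫ _x in CGP.S n, Real.log (n+1) :=
            setIntegral_mono_on hi1
              (integrableOn_const (C := Real.log ((n:ℝ)+1)) (CGP.volume_S_lt_top n).ne)
              (CGP.measurableSet_S n) hle
        _ = (1 / n.factorial : ℝ) * Real.log (n+1) := by
            rw [setIntegral_const, smul_eq_mul, measureReal_def, CGP.vol_S' n]
    calc (n.factorial : ℝ) * ∫ x in CGP.S n, (f1 x - f2 x)
        = (n.factorial : ℝ) * ((∫ x in CGP.S n, f1 x) - ∫ x in CGP.S n, f2 x) := by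
          rw [hsub]
      _ ≤ (n.factorial : ℝ) * ((1 / n.factorial : ℝ) * Real.log (n+1)
            - (harmonicNum (n+1) - 1) / n.factorial) := by
          apply mul_le_mul_of_nonneg_left _ (by positivity)
          rw [hf2int]
          exact sub_le_sub_right hub _
      _ = Real.log ((n:ℝ)+1) - harmonicNum (n+1) + 1 := by
          field_simp
          ring
      _ = Real.log ((n+1 : ℕ) : ℝ) - harmonicNum (n+1) + 1 := by rw [hcast]
end

section
/- (Dirichlet-type integral, Appendix A(i).) Let N ≥ 1, let p = (p_1, …, p_N) be a probability vector with pairwise distinct positive entries, and let α > 0. Then I_p(α) := (N−1)! ∫_{T} (Σ_{j=1}^N p_j λ_j)^α dλ_1 ⋯ dλ_{N−1} = [Γ(N) Γ(α+1) / Γ(α+N)] · Σ_{j=1}^N p_j^{α+N−1} / ∏_{i≠j}(p_j − p_i), where T = {(λ_1,…,λ_{N−1}) ∈ ℝ^{N−1} : λ_j ≥ 0, Σ_{j<N} λ_j ≤ 1} and λ_N := 1 − Σ_{j<N} λ_j. -/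
open MeasureTheory Real

/-! Write `λ = (x, t, 1 - ∑ x - t)` and integrate out `t ∈ [0, 1 - ∑ x]` first. The integrand
is `(c + (q_a - q_b) t) ^ β` with `c` independent of `t`, where `q_a` and `q_b` are the nodes
paired with `t` and with the dependent last coordinate, so the inner integral is the difference
of two `n`-dimensional integrands `(∑ j, q'_j λ'_j) ^ (β + 1)`, with `q_b` resp. `q_a` deleted
from the nodes, divided by `(q_a - q_b) (β + 1)`. This is the recurrence of divided differences,
so by induction on the dimension the integral is `Γ(β + 1) / Γ(β + n + 1)` times the divided
difference of `x ↦ x ^ (β + n)` at the nodes, which is the sum on the right-hand side. -/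

open Finset

section DividedDifference

variable {ι κ : Type*} [DecidableEq ι] [DecidableEq κ]

-- For pairwise distinct nodes this is the divided difference `f[q_j : j ∈ s]`.
noncomputable def divDiff (s : Finset ι) (q : ι → ℝ) (f : ℝ → ℝ) : ℝ :=
  ∑ j ∈ s, f (q j) / ∏ i ∈ s.erase j, (q j - q i)

theorem divDiff_insert {s : Finset ι} {a : ι} (ha : a ∉ s) (q : ι → ℝ) (f : ℝ → ℝ) :
    divDiff (insert a s) q f =
      f (q a) / ∏ i ∈ s, (q a - q i) + divDiff s q (fun x => f x / (x - q a)) := by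
  rw [divDiff, sum_insert ha, erase_insert ha]
  congr 1
  refine sum_congr rfl fun j hj => ?_
  have haj : a ≠ j := (ne_of_mem_of_not_mem hj ha).symm
  rw [erase_insert_of_ne haj, prod_insert fun h => ha (mem_of_mem_erase h), div_div]

theorem sub_mul_divDiff_insert_insert {t : Finset ι} {a b : ι} (hab : a ≠ b) (ha : a ∉ t)
    (hb : b ∉ t) {q : ι → ℝ} (hq : Set.InjOn q ↑(insert a (insert b t))) (f : ℝ → ℝ) :
    (q a - q b) * divDiff (insert a (insert b t)) q f =
      divDiff (insert a t) q f - divDiff (insert b t) q f := by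
  have hne : ∀ i ∈ insert a (insert b t), ∀ j ∈ insert a (insert b t),
      i ≠ j → q i - q j ≠ 0 :=
    fun i hi j hj hij => sub_ne_zero.2 fun h => hij (hq hi hj h)
  have hab' := hne a (by simp) b (by simp) hab
  have hba : q b - q a ≠ 0 := by rwa [← neg_sub, neg_ne_zero]
  have hta : ∀ j ∈ t, q j - q a ≠ 0 := fun j hj =>
    hne j (by simp [hj]) a (by simp) (ne_of_mem_of_not_mem hj ha)
  have htb : ∀ j ∈ t, q j - q b ≠ 0 := fun j hj =>
    hne j (by simp [hj]) b (by simp) (ne_of_mem_of_not_mem hj hb)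
  have hPa : ∏ i ∈ t, (q a - q i) ≠ 0 := prod_ne_zero_iff.2 fun i hi =>
    hne a (by simp) i (by simp [hi]) (ne_of_mem_of_not_mem hi ha).symm
  have hPb : ∏ i ∈ t, (q b - q i) ≠ 0 := prod_ne_zero_iff.2 fun i hi =>
    hne b (by simp) i (by simp [hi]) (ne_of_mem_of_not_mem hi hb).symm
  -- partial fractions: `(q a - q b) / ((x - q a) (x - q b)) = 1 / (x - q a) - 1 / (x - q b)`
  have hpartial : (q a - q b) * divDiff t q (fun x => f x / (x - q a) / (x - q b)) =
      divDiff t q (fun x => f x / (x - q a)) - divDiff t q (fun x => f x / (x - q b)) := by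
    simp only [divDiff, mul_sum, ← sum_sub_distrib]
    refine sum_congr rfl fun j hj => ?_
    have := hta j hj
    have := htb j hj
    field_simp
    ring
  rw [divDiff_insert (by simp [hab, ha]), divDiff_insert hb, divDiff_insert ha, divDiff_insert hb,
    prod_insert hb, mul_add, mul_add, hpartial]
  field_simp
  ring

theorem sub_mul_divDiff {s : Finset ι} {a b : ι} (ha : a ∈ s) (hb : b ∈ s) (hab : a ≠ b)
    {q : ι → ℝ} (hq : Set.InjOn q s) (f : ℝ → ℝ) :
    (q a - q b) * divDiff s q f = divDiff (s.erase b) q f - divDiff (s.erase a) q f := by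
  set t := (s.erase a).erase b with ht
  have hbt : insert b t = s.erase a := insert_erase (mem_erase.2 ⟨hab.symm, hb⟩)
  have hat : insert a t = s.erase b := by
    rw [ht, erase_right_comm, insert_erase (mem_erase.2 ⟨hab, ha⟩)]
  have hs : insert a (insert b t) = s := by rw [hbt, insert_erase ha]
  have key := sub_mul_divDiff_insert_insert hab (by simp [ht]) (by simp [ht]) (hs ▸ hq) f
  rwa [hs, hat, hbt] at key

theorem divDiff_map (s : Finset κ) (φ : κ ↪ ι) (q : ι → ℝ) (f : ℝ → ℝ) :
    divDiff (s.map φ) q f = divDiff s (q ∘ φ) f := by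
  simp only [divDiff, sum_map, ← map_erase, prod_map, Function.comp_apply]

theorem divDiff_comp_succAbove {n : ℕ} (q : Fin (n + 1) → ℝ) (b : Fin (n + 1))
    (f : ℝ → ℝ) : divDiff univ (q ∘ b.succAbove) f = divDiff (univ.erase b) q f := by
  rw [Fin.univ_succAbove n b, erase_cons, divDiff_map]
  rfl

end DividedDifference

theorem integral_rpow_affine {A c s β : ℝ} (hc : c ≠ 0) (hβ : -1 < β) :
    ∫ t in (0 : ℝ)..s, (A + c * t) ^ β =
      ((A + c * s) ^ (β + 1) - A ^ (β + 1)) / (c * (β + 1)) := by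
  rw [intervalIntegral.integral_comp_add_mul (fun x => x ^ β) hc, integral_rpow (Or.inl hβ),
    mul_zero, add_zero, smul_eq_mul, inv_mul_eq_div, div_div, mul_comm (β + 1)]

section CornerSimplex

variable {n : ℕ}

def cornerSimplex (n : ℕ) : Set (Fin n → ℝ) :=
  {x | (∀ j, 0 ≤ x j) ∧ ∑ j, x j ≤ 1}

noncomputable def simplexLift (x : Fin n → ℝ) : Fin (n + 1) → ℝ :=
  Fin.snoc x (1 - ∑ j, x j)

@[simp]
theorem simplexLift_castSucc (x : Fin n → ℝ) (j : Fin n) : simplexLift x j.castSucc = x j :=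
  Fin.snoc_castSucc ..

@[simp]
theorem simplexLift_last (x : Fin n → ℝ) : simplexLift x (Fin.last n) = 1 - ∑ j, x j :=
  Fin.snoc_last ..

theorem sum_simplexLift (x : Fin n → ℝ) : ∑ j, simplexLift x j = 1 := by
  simp [Fin.sum_univ_castSucc]

theorem simplexLift_nonneg {x : Fin n → ℝ} (hx : x ∈ cornerSimplex n) (j : Fin (n + 1)) :
    0 ≤ simplexLift x j := by
  induction j using Fin.lastCases with
  | last => simpa using hx.2
  | cast j => simpa using hx.1 j

theorem sum_mul_simplexLift_pos {q : Fin (n + 1) → ℝ} (hq : ∀ j, 0 < q j) {x : Fin n → ℝ}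
    (hx : x ∈ cornerSimplex n) : 0 < ∑ j, q j * simplexLift x j := by
  obtain ⟨j, -, hj⟩ : ∃ j ∈ univ, (0 : ℝ) < simplexLift x j :=
    exists_lt_of_sum_lt (by simp [sum_simplexLift])
  exact sum_pos' (fun i _ => mul_nonneg (hq i).le (simplexLift_nonneg hx i))
    ⟨j, mem_univ j, mul_pos (hq j) hj⟩

@[fun_prop]
theorem continuous_simplexLift :
    Continuous (simplexLift : (Fin n → ℝ) → Fin (n + 1) → ℝ) :=
  continuous_pi fun j => by
    induction j using Fin.lastCases with
    | last => simp only [simplexLift_last]; fun_prop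
    | cast j => simp only [simplexLift_castSucc]; fun_prop

theorem isCompact_cornerSimplex (n : ℕ) : IsCompact (cornerSimplex n) := by
  have hclosed : IsClosed (cornerSimplex n) := by
    simp only [cornerSimplex, Set.ofPred_and, Set.ofPred_forall]
    exact (isClosed_iInter fun j => isClosed_le (by fun_prop) (by fun_prop)).inter
      (isClosed_le (by fun_prop) (by fun_prop))
  refine (isCompact_Icc (a := 0) (b := 1)).of_isClosed_subset hclosed fun x hx =>
    ⟨hx.1, fun j => ?_⟩
  exact (single_le_sum (fun i _ => hx.1 i) (mem_univ j)).trans hx.2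

theorem integrableOn_rpow_sum_mul_simplexLift {q : Fin (n + 1) → ℝ} (hq : ∀ j, 0 < q j)
    (β : ℝ) : IntegrableOn (fun x => (∑ j, q j * simplexLift x j) ^ β) (cornerSimplex n) := by
  have hcont : Continuous fun x : Fin n → ℝ => ∑ j, q j * simplexLift x j := by fun_prop
  exact (hcont.continuousOn.rpow_const fun x hx =>
    Or.inl (sum_mul_simplexLift_pos hq hx).ne').integrableOn_compact (isCompact_cornerSimplex n)

theorem snoc_mem_cornerSimplex_iff {x : Fin n → ℝ} {t : ℝ} :
    Fin.snoc x t ∈ cornerSimplex (n + 1) ↔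
      x ∈ cornerSimplex n ∧ t ∈ Set.Icc 0 (1 - ∑ j, x j) := by
  simp only [cornerSimplex, Set.mem_ofPred_eq, Fin.forall_fin_succ', Fin.snoc_castSucc,
    Fin.snoc_last, Fin.sum_univ_castSucc, Set.mem_Icc]
  constructor
  · rintro ⟨⟨hx, ht⟩, hsum⟩
    exact ⟨⟨hx, by linarith⟩, ht, by linarith⟩
  · rintro ⟨⟨hx, -⟩, ht, hsum⟩
    exact ⟨⟨hx, ht⟩, by linarith⟩

theorem integral_indicator_cornerSimplex_snoc (g : (Fin (n + 1) → ℝ) → ℝ) (x : Fin n → ℝ) :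
    ∫ t, (cornerSimplex (n + 1)).indicator g (Fin.snoc x t) = (cornerSimplex n).indicator
      (fun x => ∫ t in (0 : ℝ)..(1 - ∑ j, x j), g (Fin.snoc x t)) x := by
  by_cases hx : x ∈ cornerSimplex n
  · have hs : (0 : ℝ) ≤ 1 - ∑ j, x j := by linarith [hx.2]
    have hfiber : ∀ t, (cornerSimplex (n + 1)).indicator g (Fin.snoc x t) =
        (Set.Icc 0 (1 - ∑ j, x j)).indicator (fun t => g (Fin.snoc x t)) t := fun t => by
      simp only [Set.indicator, snoc_mem_cornerSimplex_iff, hx, true_and]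
    simp only [hfiber, integral_indicator measurableSet_Icc, Set.indicator_of_mem hx,
      intervalIntegral.integral_of_le hs, integral_Icc_eq_integral_Ioc]
  · have hfiber : ∀ t, (cornerSimplex (n + 1)).indicator g (Fin.snoc x t) = 0 := fun t =>
      Set.indicator_of_notMem (fun h => hx (snoc_mem_cornerSimplex_iff.1 h).1) _
    simp [hfiber, hx]

theorem integral_cornerSimplex_succ {g : (Fin (n + 1) → ℝ) → ℝ}
    (hg : IntegrableOn g (cornerSimplex (n + 1))) :
    ∫ x in cornerSimplex (n + 1), g x =
      ∫ x in cornerSimplex n, ∫ t in (0 : ℝ)..(1 - ∑ j, x j), g (Fin.snoc x t) := by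
  set C := cornerSimplex (n + 1)
  have hC : MeasurableSet C := (isCompact_cornerSimplex _).isClosed.measurableSet
  have hCn : MeasurableSet (cornerSimplex n) :=
    (isCompact_cornerSimplex _).isClosed.measurableSet
  let e := (MeasurableEquiv.piFinSuccAbove (fun _ : Fin (n + 1) => ℝ) (Fin.last n)).symm
  have he : MeasurePreserving e :=
    (volume_preserving_piFinSuccAbove (fun _ : Fin (n + 1) => ℝ) (Fin.last n)).symm _
  have he_apply : ∀ y, e y = Fin.snoc y.2 y.1 := fun y => by
    simp [e, MeasurableEquiv.piFinSuccAbove_symm_apply, Fin.insertNthEquiv, Fin.insertNth_last']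
  have hint : Integrable (C.indicator g ∘ e) (volume.prod volume) := by
    rw [← Measure.volume_eq_prod, he.integrable_comp_emb e.measurableEmbedding,
      integrable_indicator_iff hC]
    exact hg
  calc ∫ x in C, g x = ∫ y, C.indicator g (e y) := by
        rw [he.integral_comp' (C.indicator g), integral_indicator hC]
    _ = ∫ x, ∫ t, C.indicator g (Fin.snoc x t) := by
        rw [Measure.volume_eq_prod]
        exact (integral_prod_symm _ hint).trans (by simp only [Function.comp_apply, he_apply])
    _ = _ := by simp only [C, integral_indicator_cornerSimplex_snoc, integral_indicator hCn]

section Nodes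

variable (q : Fin (n + 2) → ℝ) (x : Fin n → ℝ)

theorem sum_mul_simplexLift_snoc (t : ℝ) :
    ∑ j, q j * simplexLift (Fin.snoc x t) j =
      ∑ j, (q ∘ (Fin.last n).castSucc.succAbove) j * simplexLift x j +
        (q (Fin.last n).castSucc - q (Fin.last (n + 1))) * t := by
  simp [Fin.sum_univ_castSucc, Fin.castSucc_succAbove_castSucc]
  ring

theorem sum_mul_simplexLift_comp_succAbove_last :
    ∑ j, (q ∘ (Fin.last (n + 1)).succAbove) j * simplexLift x j =
      ∑ j, (q ∘ (Fin.last n).castSucc.succAbove) j * simplexLift x j +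
        (q (Fin.last n).castSucc - q (Fin.last (n + 1))) * (1 - ∑ j, x j) := by
  simp [Fin.sum_univ_castSucc, Fin.castSucc_succAbove_castSucc]
  ring

end Nodes

theorem integral_cornerSimplex_rpow_succ {q : Fin (n + 2) → ℝ} (hq : ∀ j, 0 < q j)
    (hne : q (Fin.last n).castSucc ≠ q (Fin.last (n + 1))) {β : ℝ} (hβ : -1 < β) :
    ∫ x in cornerSimplex (n + 1), (∑ j, q j * simplexLift x j) ^ β =
      ((∫ x in cornerSimplex n,
          (∑ j, (q ∘ (Fin.last (n + 1)).succAbove) j * simplexLift x j) ^ (β + 1)) -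
        ∫ x in cornerSimplex n,
          (∑ j, (q ∘ (Fin.last n).castSucc.succAbove) j * simplexLift x j) ^ (β + 1)) /
        ((q (Fin.last n).castSucc - q (Fin.last (n + 1))) * (β + 1)) := by
  rw [integral_cornerSimplex_succ (integrableOn_rpow_sum_mul_simplexLift hq β),
    ← integral_sub (integrableOn_rpow_sum_mul_simplexLift (q := q ∘ _) (fun j => hq _) _)
      (integrableOn_rpow_sum_mul_simplexLift (q := q ∘ _) (fun j => hq _) _),
    ← integral_div]
  refine setIntegral_congr_fun (isCompact_cornerSimplex n).isClosed.measurableSet fun x _ => ?_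
  simp only [sum_mul_simplexLift_snoc, integral_rpow_affine (sub_ne_zero.2 hne) hβ,
    sum_mul_simplexLift_comp_succAbove_last]

theorem integral_cornerSimplex_rpow {q : Fin (n + 1) → ℝ} (hq : ∀ j, 0 < q j)
    (hinj : Function.Injective q) {β : ℝ} (hβ : -1 < β) :
    ∫ x in cornerSimplex n, (∑ j, q j * simplexLift x j) ^ β =
      Gamma (β + 1) / Gamma (β + n + 1) * divDiff univ q (· ^ (β + n)) := by
  induction n generalizing β with
  | zero =>
    have hΓ : Gamma (β + 1) ≠ 0 := (Gamma_pos_of_pos (by linarith)).ne'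
    simp [cornerSimplex, divDiff, simplexLift, Fin.snoc, measureReal_def, volume_pi, hΓ]
  | succ n ih =>
    set a := (Fin.last n).castSucc
    set b := Fin.last (n + 1)
    have hab : a ≠ b := (Fin.castSucc_lt_last _).ne
    have hqab : q a - q b ≠ 0 := sub_ne_zero.2 (hinj.ne hab)
    have hβ1 : β + 1 ≠ 0 := (neg_lt_iff_pos_add.1 hβ).ne'
    have hβ' : -1 < β + 1 := by linarith
    have hexp : β + 1 + n = β + ↑(n + 1) := by push_cast; ring
    rw [integral_cornerSimplex_rpow_succ hq (hinj.ne hab) hβ,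
      ih (q := q ∘ b.succAbove) (fun j => hq _) (hinj.comp Fin.succAbove_right_injective) hβ',
      ih (q := q ∘ a.succAbove) (fun j => hq _) (hinj.comp Fin.succAbove_right_injective) hβ',
      ← mul_sub, divDiff_comp_succAbove, divDiff_comp_succAbove, hexp,
      ← sub_mul_divDiff (mem_univ a) (mem_univ b) hab hinj.injOn, Gamma_add_one hβ1]
    simp only [a, b] at hqab ⊢
    field_simp

end CornerSimplex

theorem simplexMap_succ {n : ℕ} (x : Fin n → ℝ) : simplexMap (n + 1) x = simplexLift x := by
  funext i
  induction i using Fin.lastCases with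
  | last => simp [simplexMap]
  | cast j => simp [simplexMap]

theorem simplexIntegral_succ (n : ℕ) (f : (Fin (n + 1) → ℝ) → ℝ) :
    simplexIntegral (n + 1) f = n.factorial * ∫ x in cornerSimplex n, f (simplexLift x) := by
  simp only [simplexIntegral, simplexMap_succ]
  rfl

theorem dirichlet_integral_general (N : ℕ) (hN : 1 ≤ N) (p : Fin N → ℝ)
    (hp : ∀ j, 0 < p j)
    (hdist : ∀ j k : Fin N, j ≠ k → p j ≠ p k) (α : ℝ) (hα : 0 < α) :
    simplexIntegral N (fun lam => (∑ j, p j * lam j) ^ α) =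
      (Real.Gamma N * Real.Gamma (α + 1) / Real.Gamma (α + N)) *
        ∑ j, p j ^ (α + N - 1) / ∏ i ∈ Finset.univ.erase j, (p j - p i) := by
  obtain ⟨n, rfl⟩ := Nat.exists_eq_add_of_le' hN
  have hinj : Function.Injective p := fun j k h => by_contra fun hjk => hdist j k hjk h
  rw [simplexIntegral_succ, integral_cornerSimplex_rpow hp hinj (by linarith)]
  push_cast
  rw [Gamma_nat_eq_factorial, divDiff]
  ring_nf

/-- Appendix A(i): the Dirichlet-type integral
`I_p(α) = (N-1)! ∫_T (∑_j p_j λ_j)^α dλ` equals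
`Γ(N)Γ(α+1)/Γ(α+N) · ∑_j p_j^{α+N-1}/∏_{i≠j}(p_j - p_i)`. -/
theorem dirichlet_integral (N : ℕ) (hN : 1 ≤ N) (p : Fin N → ℝ)
    (hp : ∀ j, 0 < p j) (hsum : ∑ j, p j = 1)
    (hdist : ∀ j k : Fin N, j ≠ k → p j ≠ p k) (α : ℝ) (hα : 0 < α) :
    simplexIntegral N (fun lam => (∑ j, p j * lam j) ^ α) =
      (Real.Gamma N * Real.Gamma (α + 1) / Real.Gamma (α + N)) *
        ∑ j, p j ^ (α + N - 1) / ∏ i ∈ Finset.univ.erase j, (p j - p i) :=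
  dirichlet_integral_general N hN p hp hdist α hα
end
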